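/- arXiv:math/0502436 — 4 statements merged into one kernel-verified Lean document; each statement's English description precedes it below -/
import Mathlib

section
/- Let L be the periodic-parabolic operator L ψ = Σ_{i,j} a_{ij}(x,t) ψ_{x_i x_j} − ψ_t + Σ_i b_i(x,t) ψ_{x_i} + c(x,t) ψ with continuous coefficients 1-periodic in each component of x and T-periodic in t, where (a_{ij}) is symmetric and uniformly elliptic. Suppose φ is a C^{2,1} function, periodic with these periods and strictly positive, satisfying L φ = μ φ for some μ ∈ ℝ. Then μ = inf_{ψ ∈ E⁺} sup_{(x,t) ∈ D} (L ψ)(x,t) / ψ(x,t), where D = [0,1]^N × [0,T] and E⁺ is the set of strictly positive C^{2,1} functions on ℝ^N × ℝ periodic with the same periods. -/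
open MeasureTheory Filter Set

noncomputable section

/-- Partial derivative in the `i`-th spatial coordinate of a function on `ℝ^N × ℝ`. -/
def pdX {N : ℕ} (i : Fin N) (u : (Fin N → ℝ) → ℝ → ℝ) : (Fin N → ℝ) → ℝ → ℝ :=
  fun x t => deriv (fun z => u (Function.update x i z) t) (x i)

/-- Partial derivative in time of a function on `ℝ^N × ℝ`. -/
def pdT {N : ℕ} (u : (Fin N → ℝ) → ℝ → ℝ) : (Fin N → ℝ) → ℝ → ℝ :=
  fun x t => deriv (fun z => u x z) t

/-- Partial derivative in `s` of a function `U(s,y,τ)`. -/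
def pdS {N : ℕ} (U : ℝ → (Fin N → ℝ) → ℝ → ℝ) : ℝ → (Fin N → ℝ) → ℝ → ℝ :=
  fun s y τ => deriv (fun z => U z y τ) s

/-- Partial derivative in the `i`-th component of `y` of a function `U(s,y,τ)`. -/
def pdY {N : ℕ} (i : Fin N) (U : ℝ → (Fin N → ℝ) → ℝ → ℝ) : ℝ → (Fin N → ℝ) → ℝ → ℝ :=
  fun s y τ => deriv (fun z => U s (Function.update y i z) τ) (y i)

/-- Partial derivative in `τ` of a function `U(s,y,τ)`. -/
def pdTau {N : ℕ} (U : ℝ → (Fin N → ℝ) → ℝ → ℝ) : ℝ → (Fin N → ℝ) → ℝ → ℝ :=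
  fun s y τ => deriv (fun z => U s y z) τ

/-- `k` is a unit vector of `ℝ^N` (Euclidean norm one). -/
def IsUnitVector {N : ℕ} (k : Fin N → ℝ) : Prop := (∑ i, (k i) ^ 2) = 1

/-- A smooth advection field `b(x,t)`, `1`-periodic in each component of `x` and in `t`,
spatially divergence free, with mean zero over the period cell `Q × (0,1)`. -/
def IsAdmissibleField {N : ℕ} (b : (Fin N → ℝ) → ℝ → (Fin N → ℝ)) : Prop :=
  ContDiff ℝ (⊤ : ℕ∞) (fun p : (Fin N → ℝ) × ℝ => b p.1 p.2) ∧
  (∀ x t i, b (x + Pi.single i 1) t = b x t) ∧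
  (∀ x t, b x (t + 1) = b x t) ∧
  (∀ x t, (∑ i, pdX i (fun x' t' => b x' t' i) x t) = 0) ∧
  (∀ i, (∫ x in Icc (0 : Fin N → ℝ) 1, ∫ t in Ioo (0 : ℝ) 1, b x t i) = 0)

/-- A positive nonlinearity: `f ∈ C²`, `f(0) = f(1) = 0`, `f > 0` on `(0,1)`. -/
def IsPositiveNonlinearity (f : ℝ → ℝ) : Prop :=
  ContDiff ℝ 2 f ∧ f 0 = 0 ∧ f 1 = 0 ∧ ∀ u ∈ Ioo (0 : ℝ) 1, 0 < f u

/-- A KPP nonlinearity. -/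
def IsKPP (f : ℝ → ℝ) : Prop :=
  IsPositiveNonlinearity f ∧ 0 < deriv f 0 ∧ deriv f 1 < 0 ∧
  ∀ u ∈ Icc (0 : ℝ) 1, f u ≤ u * deriv f 0

/-- A combustion (ignition type) nonlinearity with ignition temperature `θ`. -/
def IsCombustion (f : ℝ → ℝ) : Prop :=
  ContDiff ℝ 1 f ∧ f 1 = 0 ∧ deriv f 1 < 0 ∧
  ∃ θ ∈ Ioo (0 : ℝ) 1, (∀ u ∈ Icc (0 : ℝ) θ, f u = 0) ∧ ∀ u ∈ Ioo θ 1, 0 < f u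

/-- `U(s,y,τ)` is `1`-periodic in each component of `y` and in `τ`. -/
def PeriodicYTau {N : ℕ} (U : ℝ → (Fin N → ℝ) → ℝ → ℝ) : Prop :=
  (∀ s y τ i, U s (y + Pi.single i 1) τ = U s y τ) ∧ (∀ s y τ, U s y (τ + 1) = U s y τ)

/-- `U(s,y,τ) → 0` as `s → +∞` and `U(s,y,τ) → 1` as `s → -∞`, uniformly in `(y,τ)`. -/
def FrontLimits {N : ℕ} (U : ℝ → (Fin N → ℝ) → ℝ → ℝ) : Prop :=
  (∀ η > (0 : ℝ), ∃ M : ℝ, ∀ s y τ, M ≤ s → |U s y τ| < η) ∧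
  (∀ η > (0 : ℝ), ∃ M : ℝ, ∀ s y τ, s ≤ M → |U s y τ - 1| < η)

/-- The regularized traveling front equation
`U_τ = ε U_ss + (k ∂_s + ∇_y)² U + σ b · (k ∂_s + ∇_y) U + c U_s + f(U)`. -/
def RegFrontEq {N : ℕ} (b : (Fin N → ℝ) → ℝ → (Fin N → ℝ)) (f : ℝ → ℝ) (k : Fin N → ℝ)
    (ε σ c : ℝ) (U : ℝ → (Fin N → ℝ) → ℝ → ℝ) : Prop :=
  ∀ s y τ,
    pdTau U s y τ =
      ε * pdS (pdS U) s y τ +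
      (pdS (pdS U) s y τ + 2 * (∑ i, k i * pdY i (pdS U) s y τ)
        + (∑ i, pdY i (pdY i U) s y τ)) +
      σ * (∑ i, b y τ i * (k i * pdS U s y τ + pdY i U s y τ)) +
      c * pdS U s y τ + f (U s y τ)

/-- A classical solution of the regularized traveling-front problem with parameters `(ε,σ)`
and speed `c`: a smooth function, `1`-periodic in `y` and `τ`, solving the equation, with
uniform limits `0` at `s = +∞` and `1` at `s = -∞`. -/
def IsRegFront {N : ℕ} (b : (Fin N → ℝ) → ℝ → (Fin N → ℝ)) (f : ℝ → ℝ) (k : Fin N → ℝ)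
    (ε σ c : ℝ) (U : ℝ → (Fin N → ℝ) → ℝ → ℝ) : Prop :=
  ContDiff ℝ (⊤ : ℕ∞) (fun p : ℝ × (Fin N → ℝ) × ℝ => U p.1 p.2.1 p.2.2) ∧
  PeriodicYTau U ∧ RegFrontEq b f k ε σ c U ∧ FrontLimits U

/-- First and second partial derivatives of `U` tend to `0` uniformly as `s → ±∞`. -/
def DerivsVanish {N : ℕ} (U : ℝ → (Fin N → ℝ) → ℝ → ℝ) : Prop :=
  ∀ η > (0 : ℝ), ∃ M > (0 : ℝ), ∀ s y τ, M ≤ |s| →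
    |pdS U s y τ| < η ∧ |pdTau U s y τ| < η ∧ (∀ i, |pdY i U s y τ| < η) ∧
    |pdS (pdS U) s y τ| < η ∧ (∀ i, |pdY i (pdS U) s y τ| < η) ∧
    (∀ i j, |pdY i (pdY j U) s y τ| < η)

/-- The period cell `ℝ × Q × (0,1)` in the `(s,y,τ)` variables. -/
def cell (N : ℕ) : Set (ℝ × (Fin N → ℝ) × ℝ) :=
  (univ : Set ℝ) ×ˢ ((Icc (0 : Fin N → ℝ) 1) ×ˢ (Ioo (0 : ℝ) 1))

/-- A classical solution of `u_t = Δu + b·∇u + f(u)` on `ℝ^N × ℝ`. -/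
def IsRDASolution {N : ℕ} (b : (Fin N → ℝ) → ℝ → (Fin N → ℝ)) (f : ℝ → ℝ)
    (u : (Fin N → ℝ) → ℝ → ℝ) : Prop :=
  ContDiff ℝ 2 (fun p : (Fin N → ℝ) × ℝ => u p.1 p.2) ∧
  ∀ x t, pdT u x t = (∑ i, pdX i (pdX i u) x t) + (∑ i, b x t i * pdX i u x t) + f (u x t)

/-- A principal eigenpair `(μ, Φ)` in direction `k` at `λ = lam` (with zeroth order constant
`c₀`, in the paper `c₀ = f'(0)`): `Φ > 0` smooth, `1`-periodic in `x` and `t`, with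
`Δ Φ + (b - 2λk)·∇Φ + (λ² - λ(b·k) + c₀)Φ - Φ_t = μ Φ`. -/
def IsEigenpair {N : ℕ} (b : (Fin N → ℝ) → ℝ → (Fin N → ℝ)) (k : Fin N → ℝ)
    (c₀ lam μ : ℝ) (Φ : (Fin N → ℝ) → ℝ → ℝ) : Prop :=
  ContDiff ℝ (⊤ : ℕ∞) (fun p : (Fin N → ℝ) × ℝ => Φ p.1 p.2) ∧
  (∀ x t, 0 < Φ x t) ∧
  (∀ x t i, Φ (x + Pi.single i 1) t = Φ x t) ∧
  (∀ x t, Φ x (t + 1) = Φ x t) ∧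
  ∀ x t,
    (∑ i, pdX i (pdX i Φ) x t) + (∑ i, (b x t i - 2 * lam * k i) * pdX i Φ x t) +
      (lam ^ 2 - lam * (∑ i, b x t i * k i) + c₀) * Φ x t - pdT Φ x t = μ * Φ x t

/-- A (bounded) classical solution of the initial value problem
`u_t = Δu + b·∇u + f(u)`, `u(x,0) = u₀(x)`. -/
def IsIVPSolution {N : ℕ} (b : (Fin N → ℝ) → ℝ → (Fin N → ℝ)) (f : ℝ → ℝ)
    (u : (Fin N → ℝ) → ℝ → ℝ) (u₀ : (Fin N → ℝ) → ℝ) : Prop :=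
  ContinuousOn (fun p : (Fin N → ℝ) × ℝ => u p.1 p.2) {p | 0 ≤ p.2} ∧
  ContDiffOn ℝ 2 (fun p : (Fin N → ℝ) × ℝ => u p.1 p.2) {p | 0 < p.2} ∧
  (∀ x, u x 0 = u₀ x) ∧
  (∀ x t, 0 < t →
    pdT u x t = (∑ i, pdX i (pdX i u) x t) + (∑ i, b x t i * pdX i u x t) + f (u x t))

/-- `u₀` is wave-like in direction `k`:  `0 ≤ u₀ ≤ 1`, `inf_{Σ_r^-} u₀ → 1` as `r → -∞` and
`sup_{Σ_r^+} u₀ → 0` as `r → +∞`. -/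
def IsWaveLike {N : ℕ} (k : Fin N → ℝ) (u₀ : (Fin N → ℝ) → ℝ) : Prop :=
  (∀ x, u₀ x ∈ Icc (0 : ℝ) 1) ∧
  (∀ η > (0 : ℝ), ∃ R : ℝ, ∀ x, (∑ i, k i * x i) ≤ R → 1 - η < u₀ x) ∧
  (∀ η > (0 : ℝ), ∃ R : ℝ, ∀ x, R ≤ (∑ i, k i * x i) → u₀ x < η)

/-- The periodic-parabolic operator `L ψ = a_{ij} ψ_{x_i x_j} - ψ_t + b_i ψ_{x_i} + c ψ`. -/
def Lop {N : ℕ} (a : (Fin N → ℝ) → ℝ → Fin N → Fin N → ℝ)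
    (bb : (Fin N → ℝ) → ℝ → Fin N → ℝ) (cc : (Fin N → ℝ) → ℝ → ℝ)
    (ψ : (Fin N → ℝ) → ℝ → ℝ) : (Fin N → ℝ) → ℝ → ℝ :=
  fun x t =>
    (∑ i, ∑ j, a x t i j * pdX i (pdX j ψ) x t) - pdT ψ x t +
      (∑ i, bb x t i * pdX i ψ x t) + cc x t * ψ x t

section Aux

variable {N : ℕ}

abbrev EE (N : ℕ) := (Fin N → ℝ) × ℝ

/-- spatial basis direction -/
def ex (i : Fin N) : EE N := (Pi.single i 1, 0)
/-- time direction -/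
def et : EE N := (0, 1)

lemma update_eq_line (x : Fin N → ℝ) (i : Fin N) (z : ℝ) :
    Function.update x i z = x + (z - x i) • (Pi.single i 1 : Fin N → ℝ) := by
  funext j
  rcases eq_or_ne j i with rfl | h
  · simp
  · simp [Function.update_apply, h, Pi.single_apply, h]

lemma hasDerivAt_line (x : Fin N → ℝ) (t : ℝ) (i : Fin N) (z : ℝ) :
    HasDerivAt (fun z : ℝ => ((Function.update x i z, t) : EE N)) (ex i) z := by
  have h1 : HasDerivAt (fun z : ℝ => x + (z - x i) • (Pi.single i 1 : Fin N → ℝ))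
      ((1:ℝ) • (Pi.single i 1 : Fin N → ℝ)) z := by
    have := ((hasDerivAt_id z).sub_const (x i)).smul_const (Pi.single i (1:ℝ) : Fin N → ℝ)
    simpa using (this.const_add x)
  have h2 : HasDerivAt (fun z : ℝ => (x + (z - x i) • (Pi.single i 1 : Fin N → ℝ), t))
      (((Pi.single i 1 : Fin N → ℝ), (0:ℝ)) : EE N) z := by
    simpa using h1.prodMk (hasDerivAt_const z t)
  have : (fun z : ℝ => ((Function.update x i z, t) : EE N))
      = fun z : ℝ => (x + (z - x i) • (Pi.single i 1 : Fin N → ℝ), t) := by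
    funext z; rw [update_eq_line]
  rw [this, ex]
  simpa using h2

/-- base lemma, spatial -/
lemma deriv_slice_x (G : EE N → ℝ) (x : Fin N → ℝ) (t : ℝ) (i : Fin N)
    (hG : DifferentiableAt ℝ G (x, t)) :
    deriv (fun z => G (Function.update x i z, t)) (x i) = fderiv ℝ G (x, t) (ex i) := by
  have hl := hasDerivAt_line x t i (x i)
  have hG' : HasFDerivAt G (fderiv ℝ G (x, t)) (Function.update x i (x i), t) := by
    rw [Function.update_eq_self]; exact hG.hasFDerivAt
  exact (hG'.comp_hasDerivAt (x i) hl).deriv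

/-- base lemma, time -/
lemma deriv_slice_t (G : EE N → ℝ) (x : Fin N → ℝ) (t : ℝ)
    (hG : DifferentiableAt ℝ G (x, t)) :
    deriv (fun z => G (x, z)) t = fderiv ℝ G (x, t) (et) := by
  have hline : HasDerivAt (fun z : ℝ => ((x, z) : EE N)) (et) t := by
    simpa [et] using (hasDerivAt_const t x).prodMk (hasDerivAt_id t)
  exact (hG.hasFDerivAt.comp_hasDerivAt t hline).deriv

section translate
variable {N : ℕ} (u : (Fin N → ℝ) → ℝ → ℝ)

lemma pdX_eq (x : Fin N → ℝ) (t : ℝ) (i : Fin N)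
    (hu : DifferentiableAt ℝ (fun p : EE N => u p.1 p.2) (x, t)) :
    pdX i u x t = fderiv ℝ (fun p : EE N => u p.1 p.2) (x, t) (ex i) :=
  deriv_slice_x _ x t i hu

lemma pdT_eq (x : Fin N → ℝ) (t : ℝ)
    (hu : DifferentiableAt ℝ (fun p : EE N => u p.1 p.2) (x, t)) :
    pdT u x t = fderiv ℝ (fun p : EE N => u p.1 p.2) (x, t) et :=
  deriv_slice_t _ x t hu

lemma Gj_contDiff (hu : ContDiff ℝ 2 (fun p : EE N => u p.1 p.2)) (j : Fin N) :
    ContDiff ℝ 1 (fun p : EE N => fderiv ℝ (fun p : EE N => u p.1 p.2) p (ex j)) :=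
  (hu.fderiv_right (by norm_num)).clm_apply contDiff_const

lemma pdXX_eq (hu : ContDiff ℝ 2 (fun p : EE N => u p.1 p.2)) (x : Fin N → ℝ) (t : ℝ)
    (i j : Fin N) :
    pdX i (pdX j u) x t =
      fderiv ℝ (fun p : EE N => fderiv ℝ (fun p : EE N => u p.1 p.2) p (ex j)) (x, t) (ex i) := by
  have hdiff : ∀ p : EE N, DifferentiableAt ℝ (fun p : EE N => u p.1 p.2) p :=
    fun p => (hu.differentiable (by norm_num)).differentiableAt
  have h1 : (fun z => pdX j u (Function.update x i z) t)
      = fun z => (fun p : EE N => fderiv ℝ (fun p : EE N => u p.1 p.2) p (ex j))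
          (Function.update x i z, t) := by
    funext z; exact pdX_eq u _ t j (hdiff _)
  show deriv (fun z => pdX j u (Function.update x i z) t) (x i) = _
  rw [h1]
  exact deriv_slice_x _ x t i
    (((Gj_contDiff u hu j).differentiable one_ne_zero).differentiableAt)

lemma continuous_pdXX (hu : ContDiff ℝ 2 (fun p : EE N => u p.1 p.2)) (i j : Fin N) :
    Continuous (fun p : EE N => pdX i (pdX j u) p.1 p.2) := by
  have h : (fun p : EE N => pdX i (pdX j u) p.1 p.2)
      = fun p : EE N => fderiv ℝ
          (fun p : EE N => fderiv ℝ (fun p : EE N => u p.1 p.2) p (ex j)) p (ex i) := by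
    funext p; exact pdXX_eq u hu p.1 p.2 i j
  rw [h]
  exact (((Gj_contDiff u hu j).fderiv_right (m := 0) (by norm_num)).clm_apply contDiff_const).continuous

lemma continuous_pdX (hu : ContDiff ℝ 2 (fun p : EE N => u p.1 p.2)) (i : Fin N) :
    Continuous (fun p : EE N => pdX i u p.1 p.2) := by
  have h : (fun p : EE N => pdX i u p.1 p.2)
      = fun p : EE N => fderiv ℝ (fun p : EE N => u p.1 p.2) p (ex i) := by
    funext p
    exact pdX_eq u p.1 p.2 i ((hu.differentiable (by norm_num)).differentiableAt)
  rw [h]; exact (Gj_contDiff u hu i).continuous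

lemma continuous_pdT (hu : ContDiff ℝ 2 (fun p : EE N => u p.1 p.2)) :
    Continuous (fun p : EE N => pdT u p.1 p.2) := by
  have h : (fun p : EE N => pdT u p.1 p.2)
      = fun p : EE N => fderiv ℝ (fun p : EE N => u p.1 p.2) p et := by
    funext p
    exact pdT_eq u p.1 p.2 ((hu.differentiable (by norm_num)).differentiableAt)
  rw [h]
  exact ((hu.fderiv_right (m := 1) (by norm_num)).clm_apply contDiff_const).continuous

lemma continuous_Lop (a : (Fin N → ℝ) → ℝ → Fin N → Fin N → ℝ)
    (bb : (Fin N → ℝ) → ℝ → Fin N → ℝ) (cc : (Fin N → ℝ) → ℝ → ℝ)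
    (ha : Continuous (fun p : EE N => a p.1 p.2))
    (hb : Continuous (fun p : EE N => bb p.1 p.2))
    (hc : Continuous (fun p : EE N => cc p.1 p.2))
    (hu : ContDiff ℝ 2 (fun p : EE N => u p.1 p.2)) :
    Continuous (fun p : EE N => Lop a bb cc u p.1 p.2) := by
  have haij : ∀ i j, Continuous (fun p : EE N => a p.1 p.2 i j) := fun i j =>
    ((continuous_apply j).comp ((continuous_apply i).comp ha))
  have hbi : ∀ i, Continuous (fun p : EE N => bb p.1 p.2 i) := fun i =>
    (continuous_apply i).comp hb
  unfold Lop
  refine ((((continuous_finset_sum _ fun i _ => continuous_finset_sum _ fun j _ =>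
      (haij i j).mul (continuous_pdXX u hu i j)).sub
      (continuous_pdT u hu)).add
      (continuous_finset_sum _ fun i _ => (hbi i).mul (continuous_pdX u hu i))).add
      (hc.mul hu.continuous))
end translate

section periodic
variable {N : ℕ} {u : (Fin N → ℝ) → ℝ → ℝ} {T : ℝ}

lemma per_int_x (hx : ∀ x t i, u (x + Pi.single i 1) t = u x t) (i : Fin N) (n : ℤ) :
    ∀ x t, u (x + Pi.single i (n : ℝ)) t = u x t := by
  induction n using Int.induction_on with
  | zero => intro x t; simp
  | succ k ih =>
      intro x t
      have h1 : x + Pi.single i (((k : ℤ) + 1 : ℤ) : ℝ)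
          = (x + Pi.single i ((k : ℤ) : ℝ)) + Pi.single i 1 := by
        rw [add_assoc, ← Pi.single_add]; norm_num
      rw [h1, hx, ih]
  | pred k ih =>
      intro x t
      have h3 : x + Pi.single i (((-(k:ℤ) - 1 : ℤ)) : ℝ) + Pi.single i 1
          = x + Pi.single i ((-(k:ℤ) : ℤ) : ℝ) := by
        rw [add_assoc, ← Pi.single_add]; norm_num
      calc u (x + Pi.single i (((-(k:ℤ) - 1 : ℤ)) : ℝ)) t
          = u (x + Pi.single i (((-(k:ℤ) - 1 : ℤ)) : ℝ) + Pi.single i 1) t := (hx _ t i).symm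
        _ = u (x + Pi.single i ((-(k:ℤ) : ℤ) : ℝ)) t := by rw [h3]
        _ = u x t := ih x t

lemma per_vec_x (hx : ∀ x t i, u (x + Pi.single i 1) t = u x t) (n : Fin N → ℤ)
    (x : Fin N → ℝ) (t : ℝ) : u (x + fun i => (n i : ℝ)) t = u x t := by
  have hsum : (fun i => (n i : ℝ)) = ∑ i, Pi.single i ((n i : ℝ)) := by
    rw [Finset.univ_sum_single (fun i => (n i : ℝ))]
  rw [hsum]
  suffices h : ∀ s : Finset (Fin N), ∀ x, u (x + ∑ i ∈ s, Pi.single i ((n i : ℝ))) t = u x t from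
    h Finset.univ x
  intro s
  induction s using Finset.induction_on with
  | empty => simp
  | @insert a s ha ih =>
      intro x
      rw [Finset.sum_insert ha]
      have : x + (Pi.single a ((n a : ℝ)) + ∑ i ∈ s, Pi.single i ((n i : ℝ)))
          = (x + ∑ i ∈ s, Pi.single i ((n i : ℝ))) + Pi.single a ((n a : ℝ)) := by
        abel
      rw [this, per_int_x hx a (n a), ih]

lemma per_int_t (ht : ∀ x t, u x (t + T) = u x t) (n : ℤ) :
    ∀ x t, u x (t + (n : ℝ) * T) = u x t := by
  induction n using Int.induction_on with
  | zero => intro x t; simp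
  | succ k ih =>
      intro x t
      have h1 : t + (((k : ℤ) + 1 : ℤ) : ℝ) * T = (t + ((k : ℤ) : ℝ) * T) + T := by
        push_cast; ring
      rw [h1, ht, ih]
  | pred k ih =>
      intro x t
      have h3 : t + ((-(k:ℤ) - 1 : ℤ) : ℝ) * T + T = t + ((-(k:ℤ) : ℤ) : ℝ) * T := by
        push_cast; ring
      calc u x (t + ((-(k:ℤ) - 1 : ℤ) : ℝ) * T)
          = u x (t + ((-(k:ℤ) - 1 : ℤ) : ℝ) * T + T) := (ht _ _).symm
        _ = u x (t + ((-(k:ℤ) : ℤ) : ℝ) * T) := by rw [h3]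
        _ = u x t := ih x t

lemma per_reduce (hT : 0 < T) (x : Fin N → ℝ) (t : ℝ) :
    ∃ x' : Fin N → ℝ, ∃ t' : ℝ, x' ∈ Icc (0 : Fin N → ℝ) 1 ∧ t' ∈ Icc (0 : ℝ) T ∧
      ∀ u : (Fin N → ℝ) → ℝ → ℝ,
        (∀ x t i, u (x + Pi.single i 1) t = u x t) →
        (∀ x t, u x (t + T) = u x t) → u x t = u x' t' := by
  refine ⟨fun i => Int.fract (x i), Int.fract (t / T) * T, ?_, ?_, ?_⟩
  · constructor
    · intro i; exact Int.fract_nonneg _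
    · intro i; exact (Int.fract_lt_one _).le
  · constructor
    · exact mul_nonneg (Int.fract_nonneg _) hT.le
    · calc Int.fract (t / T) * T ≤ 1 * T :=
          mul_le_mul_of_nonneg_right (Int.fract_lt_one _).le hT.le
        _ = T := one_mul T
  · intro u hx ht
    have hxeq : x = (fun i => Int.fract (x i)) + fun i => ((⌊x i⌋ : ℤ) : ℝ) := by
      funext i
      simp only [Pi.add_apply]
      rw [Int.fract]; ring
    have hteq : t = Int.fract (t / T) * T + ((⌊t / T⌋ : ℤ) : ℝ) * T := by
      have hTne : T ≠ 0 := ne_of_gt hT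
      rw [Int.fract, sub_mul, div_mul_cancel₀ _ hTne]
      ring
    calc u x t = u x (Int.fract (t / T) * T + ((⌊t / T⌋ : ℤ) : ℝ) * T) := by rw [← hteq]
      _ = u x (Int.fract (t / T) * T) := per_int_t ht _ x _
      _ = u ((fun i => Int.fract (x i)) + fun i => ((⌊x i⌋ : ℤ) : ℝ)) (Int.fract (t / T) * T) := by
          rw [← hxeq]
      _ = u (fun i => Int.fract (x i)) (Int.fract (t / T) * T) := per_vec_x hx _ _ _

end periodic

/-- 1-D second derivative test at a global minimum. -/
lemma sec_deriv_nonneg {h h' : ℝ → ℝ} {h'' : ℝ}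
    (hmin : ∀ s, h 0 ≤ h s) (hd : ∀ s, HasDerivAt h (h' s) s)
    (hd' : HasDerivAt h' h'' 0) : 0 ≤ h'' := by
  by_contra hneg
  push_neg at hneg
  have h'0 : h' 0 = 0 := by
    have hlm : IsLocalMin h 0 := Filter.Eventually.of_forall hmin
    rw [← (hd 0).deriv]
    exact hlm.deriv_eq_zero
  have hslope : Filter.Tendsto (slope h' 0) (nhdsWithin 0 {(0:ℝ)}ᶜ) (nhds h'') :=
    hasDerivAt_iff_tendsto_slope.mp hd'
  have hev : ∀ᶠ s in nhdsWithin 0 {(0:ℝ)}ᶜ, slope h' 0 s < h'' / 2 :=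
    hslope.eventually_lt_const (by linarith)
  have hev2 : ∀ᶠ s in nhdsWithin (0:ℝ) (Ioi 0), slope h' 0 s < h'' / 2 :=
    nhdsWithin_mono 0 (fun s hs => ne_of_gt hs) hev
  obtain ⟨ε, hε, hsub⟩ := mem_nhdsGT_iff_exists_Ioo_subset.mp hev2
  have hεpos : (0:ℝ) < ε := hε
  have hneg' : ∀ s ∈ Ioo (0:ℝ) ε, h' s < 0 := by
    intro s hs
    have := hsub hs
    simp only [mem_setOf_eq, slope_def_field, div_eq_iff] at this
    have hsl : (h' s - h' 0) / (s - 0) < h'' / 2 := this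
    rw [h'0, sub_zero, sub_zero] at hsl
    have : h' s < (h'' / 2) * s := (div_lt_iff₀ hs.1).mp hsl
    nlinarith [hs.1]
  -- MVT on [0, ε/2]
  obtain ⟨c, hc, hceq⟩ := exists_hasDerivAt_eq_slope h h' (by linarith : (0:ℝ) < ε / 2)
    (fun s _ => (hd s).continuousAt.continuousWithinAt)
    (fun s _ => hd s)
  have hc' : h' c < 0 := hneg' c ⟨hc.1, by linarith [hc.2]⟩
  have : 0 ≤ (h (ε / 2) - h 0) / (ε / 2 - 0) :=
    div_nonneg (by linarith [hmin (ε / 2)]) (by linarith)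
  rw [← hceq] at this
  linarith

/-- Pairing of a psd symmetric matrix with a nonnegative quadratic form is nonnegative. -/
lemma quad_pairing_nonneg {N : ℕ} (A H : Matrix (Fin N) (Fin N) ℝ)
    (hAsym : ∀ i j, A i j = A j i)
    (hA : ∀ ξ : Fin N → ℝ, 0 ≤ ∑ i, ∑ j, A i j * ξ i * ξ j)
    (hH : ∀ ξ : Fin N → ℝ, 0 ≤ ∑ i, ∑ j, H i j * ξ i * ξ j) :
    0 ≤ ∑ i, ∑ j, A i j * H i j := by
  have hpsd : A.PosSemidef := by
    refine Matrix.PosSemidef.of_dotProduct_mulVec_nonneg ?_ ?_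
    · exact Matrix.ext fun i j => by
        simp [Matrix.conjTranspose_apply, hAsym j i]
    · intro ξ
      have := hA ξ
      simp only [dotProduct, Matrix.mulVec, dotProduct, star_trivial,
        Finset.mul_sum]
      calc (0:ℝ) ≤ ∑ i, ∑ j, A i j * ξ i * ξ j := this
        _ = ∑ i, ∑ j, ξ i * (A i j * ξ j) := by
            refine Finset.sum_congr rfl fun i _ => Finset.sum_congr rfl fun j _ => by ring
  obtain ⟨m, B, hB⟩ := Matrix.posSemidef_iff_eq_sum_vecMulVec.mp hpsd
  have hentry : ∀ i j, A i j = ∑ k, B k i * B k j := by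
    intro i j
    rw [hB]
    simp [Matrix.sum_apply, Matrix.vecMulVec_apply]
  calc (0:ℝ) ≤ ∑ k, ∑ i, ∑ j, H i j * B k i * B k j :=
        Finset.sum_nonneg fun k _ => hH (fun i => B k i)
    _ = ∑ i, ∑ k, ∑ j, H i j * B k i * B k j := Finset.sum_comm
    _ = ∑ i, ∑ j, ∑ k, H i j * B k i * B k j := by
        exact Finset.sum_congr rfl fun i _ => Finset.sum_comm
    _ = ∑ i, ∑ j, A i j * H i j := by
        refine Finset.sum_congr rfl fun i _ => Finset.sum_congr rfl fun j _ => ?_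
        rw [hentry i j, Finset.sum_mul]
        exact Finset.sum_congr rfl fun k _ => by ring

lemma core {N : ℕ} {T : ℝ} (hT : 0 < T)
    (a : (Fin N → ℝ) → ℝ → Fin N → Fin N → ℝ)
    (bb : (Fin N → ℝ) → ℝ → Fin N → ℝ) (cc : (Fin N → ℝ) → ℝ → ℝ)
    (hsym : ∀ x t i j, a x t i j = a x t j i)
    (hell : ∃ θ₀ > (0 : ℝ), ∀ x t (ξ : Fin N → ℝ),
      θ₀ * (∑ i, (ξ i) ^ 2) ≤ ∑ i, ∑ j, a x t i j * ξ i * ξ j)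
    (φ : (Fin N → ℝ) → ℝ → ℝ) (μ : ℝ)
    (hφ_smooth : ContDiff ℝ 2 (fun p : EE N => φ p.1 p.2))
    (hφ_pos : ∀ x t, 0 < φ x t)
    (hφ_eq : ∀ x t, Lop a bb cc φ x t = μ * φ x t)
    (ψ : (Fin N → ℝ) → ℝ → ℝ)
    (hψ_smooth : ContDiff ℝ 2 (fun p : EE N => ψ p.1 p.2))
    (hψ_pos : ∀ x t, 0 < ψ x t)
    (hψ_perx : ∀ x t i, ψ (x + Pi.single i 1) t = ψ x t)
    (hψ_pert : ∀ x t, ψ x (t + T) = ψ x t)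
    (hφ_perx : ∀ x t i, φ (x + Pi.single i 1) t = φ x t)
    (hφ_pert : ∀ x t, φ x (t + T) = φ x t) :
    ∃ p₀ ∈ (Icc (0 : Fin N → ℝ) 1) ×ˢ (Icc (0 : ℝ) T),
      μ * ψ p₀.1 p₀.2 ≤ Lop a bb cc ψ p₀.1 p₀.2 := by
  classical
  set Φ : EE N → ℝ := fun p => φ p.1 p.2 with hΦdef
  set P : EE N → ℝ := fun p => ψ p.1 p.2 with hPdef
  have hΦpos : ∀ p : EE N, 0 < Φ p := fun p => hφ_pos p.1 p.2
  have hΦne : ∀ p : EE N, Φ p ≠ 0 := fun p => (hΦpos p).ne'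
  set w : EE N → ℝ := fun p => P p / Φ p with hwdef
  have hw : ContDiff ℝ 2 w := hψ_smooth.div hφ_smooth hΦne
  have hwd : Differentiable ℝ w := hw.differentiable (by norm_num)
  have hΦd : Differentiable ℝ Φ := hφ_smooth.differentiable (by norm_num)
  have hPd : Differentiable ℝ P := hψ_smooth.differentiable (by norm_num)
  -- minimum of w over the compact cell
  have hDcomp : IsCompact ((Icc (0 : Fin N → ℝ) 1) ×ˢ (Icc (0 : ℝ) T)) :=
    isCompact_Icc.prod isCompact_Icc
  have hDne : ((Icc (0 : Fin N → ℝ) 1) ×ˢ (Icc (0 : ℝ) T)).Nonempty :=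
    ⟨(0, 0), ⟨⟨le_refl _, fun i => zero_le_one⟩, ⟨le_refl _, hT.le⟩⟩⟩
  obtain ⟨p₀, hp₀D, hminD⟩ := hDcomp.exists_isMinOn hDne hw.continuous.continuousOn
  -- the minimum is global by periodicity
  have hgmin : ∀ p : EE N, w p₀ ≤ w p := by
    intro p
    obtain ⟨x', t', hx'm, ht'm, hred⟩ := per_reduce hT p.1 p.2
    have hψr := hred ψ hψ_perx hψ_pert
    have hφr := hred φ hφ_perx hφ_pert
    have hwr : w p = w (x', t') := by
      simp only [hwdef, hPdef, hΦdef, hψr, hφr]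
    rw [hwr]
    exact hminD ⟨hx'm, ht'm⟩
  obtain ⟨x₀, t₀⟩ := p₀
  have hgrad : fderiv ℝ w (x₀, t₀) = 0 := by
    have : IsLocalMin w (x₀, t₀) := Filter.Eventually.of_forall hgmin
    exact this.fderiv_eq_zero
  -- second order condition: the Hessian quadratic form of w is nonneg
  have hGwd : ∀ j, Differentiable ℝ (fun p : EE N => fderiv ℝ w p (ex j)) := fun j =>
    (((hw.fderiv_right (m := 1) (by norm_num)).clm_apply contDiff_const).differentiable one_ne_zero)
  have hH : ∀ ξ : Fin N → ℝ, 0 ≤ ∑ i, ∑ j,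
      (fderiv ℝ (fun p : EE N => fderiv ℝ w p (ex j)) (x₀, t₀) (ex i)) * ξ i * ξ j := by
    intro ξ
    set v : EE N := (ξ, 0) with hvdef
    have hv : v = ∑ j, ξ j • ex j := by
      have h1 : (∑ j, ξ j • ex j : EE N).1 = ∑ j, ξ j • (Pi.single j 1 : Fin N → ℝ) := by
        rw [Prod.fst_sum]; rfl
      have h2 : (∑ j, ξ j • ex j : EE N).2 = (0 : ℝ) := by
        rw [Prod.snd_sum]; simp [ex]
      have h1' : ∑ j, ξ j • (Pi.single j 1 : Fin N → ℝ) = ξ := by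
        have : ∀ j, ξ j • (Pi.single j 1 : Fin N → ℝ) = Pi.single j (ξ j) := by
          intro j; funext k
          rcases eq_or_ne k j with rfl | h
          · simp
          · simp [Pi.single_apply, h]
        simp_rw [this]
        exact Finset.univ_sum_single ξ
      refine Prod.ext ?_ ?_
      · rw [h1, h1']
      · rw [h2]
    set c : ℝ → EE N := fun s => (x₀, t₀) + s • v with hcdef
    have hc : ∀ s, HasDerivAt c v s := fun s => by
      have := ((hasDerivAt_id s).smul_const v).const_add ((x₀, t₀) : EE N)
      rw [one_smul] at this
      exact this
    have hc0 : c 0 = (x₀, t₀) := by simp [hcdef]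
    have hd : ∀ s, HasDerivAt (fun s => w (c s)) (fderiv ℝ w (c s) v) s := fun s =>
      (hwd (c s)).hasFDerivAt.comp_hasDerivAt s (hc s)
    have hgv : ContDiff ℝ 1 (fun p : EE N => fderiv ℝ w p v) :=
      (hw.fderiv_right (m := 1) (by norm_num)).clm_apply contDiff_const
    have hd' : HasDerivAt (fun s => fderiv ℝ w (c s) v)
        (fderiv ℝ (fun p : EE N => fderiv ℝ w p v) (x₀, t₀) v) 0 := by
      have := ((hgv.differentiable one_ne_zero) (c 0)).hasFDerivAt.comp_hasDerivAt 0 (hc 0)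
      rwa [hc0] at this
    have hmin0 : ∀ s, w (c 0) ≤ w (c s) := fun s => by rw [hc0]; exact hgmin (c s)
    have h2 : 0 ≤ fderiv ℝ (fun p : EE N => fderiv ℝ w p v) (x₀, t₀) v :=
      sec_deriv_nonneg hmin0 hd hd'
    -- expand bilinearly
    have hgv_eq : (fun p : EE N => fderiv ℝ w p v)
        = fun p : EE N => ∑ j, ξ j * fderiv ℝ w p (ex j) := by
      funext p
      rw [hv, map_sum]
      exact Finset.sum_congr rfl fun j _ => by rw [_root_.map_smul]; rfl
    have hsumfd : HasFDerivAt (fun p : EE N => fderiv ℝ w p v)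
        (∑ j, ξ j • fderiv ℝ (fun p : EE N => fderiv ℝ w p (ex j)) (x₀, t₀)) (x₀, t₀) := by
      rw [hgv_eq]
      exact HasFDerivAt.fun_sum fun j _ =>
        ((hGwd j (x₀, t₀)).hasFDerivAt).const_mul (ξ j)
    have hfd_eq := hsumfd.fderiv
    rw [hfd_eq] at h2
    have hexp : (∑ j, ξ j • fderiv ℝ (fun p : EE N => fderiv ℝ w p (ex j)) (x₀, t₀)) v
        = ∑ j, ξ j * ∑ i, ξ i *
            fderiv ℝ (fun p : EE N => fderiv ℝ w p (ex j)) (x₀, t₀) (ex i) := by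
      rw [ContinuousLinearMap.sum_apply]
      refine Finset.sum_congr rfl fun j _ => ?_
      rw [ContinuousLinearMap.smul_apply, smul_eq_mul]
      congr 1
      rw [hv, map_sum]
      exact Finset.sum_congr rfl fun i _ => by rw [_root_.map_smul]; rfl
    rw [hexp] at h2
    calc (0:ℝ) ≤ ∑ j, ξ j * ∑ i, ξ i *
          fderiv ℝ (fun p : EE N => fderiv ℝ w p (ex j)) (x₀, t₀) (ex i) := h2
      _ = ∑ j, ∑ i, fderiv ℝ (fun p : EE N => fderiv ℝ w p (ex j)) (x₀, t₀) (ex i)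
            * ξ i * ξ j := by
          refine Finset.sum_congr rfl fun j _ => ?_
          rw [Finset.mul_sum]
          exact Finset.sum_congr rfl fun i _ => by ring
      _ = ∑ i, ∑ j, fderiv ℝ (fun p : EE N => fderiv ℝ w p (ex j)) (x₀, t₀) (ex i)
            * ξ i * ξ j := Finset.sum_comm
  -- product rule identities at the minimum point
  have hP_eq : P = fun p => w p * Φ p := by
    funext p
    rw [hwdef]
    exact (div_mul_cancel₀ (P p) (hΦne p)).symm
  have hD1 : ∀ p : EE N, fderiv ℝ P p = w p • fderiv ℝ Φ p + Φ p • fderiv ℝ w p := by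
    intro p
    conv_lhs => rw [hP_eq]
    exact fderiv_mul (hwd p) (hΦd p)
  have hGΦd : ∀ j, Differentiable ℝ (fun p : EE N => fderiv ℝ Φ p (ex j)) := fun j =>
    (((hφ_smooth.fderiv_right (m := 1) (by norm_num)).clm_apply contDiff_const).differentiable
      one_ne_zero)
  have hGw0 : ∀ j, fderiv ℝ w (x₀, t₀) (ex j) = 0 := by
    intro j; rw [hgrad]; rfl
  have hHP : ∀ i j : Fin N, pdX i (pdX j ψ) x₀ t₀
      = w (x₀, t₀) * pdX i (pdX j φ) x₀ t₀
        + Φ (x₀, t₀) * fderiv ℝ (fun p : EE N => fderiv ℝ w p (ex j)) (x₀, t₀) (ex i) := by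
    intro i j
    rw [pdXX_eq ψ hψ_smooth x₀ t₀ i j, pdXX_eq φ hφ_smooth x₀ t₀ i j]
    have hfun : (fun p : EE N => fderiv ℝ (fun p : EE N => ψ p.1 p.2) p (ex j))
        = fun p : EE N => w p * fderiv ℝ Φ p (ex j) + Φ p * fderiv ℝ w p (ex j) := by
      funext p
      have := hD1 p
      rw [show (fun p : EE N => ψ p.1 p.2) = P from rfl, this]
      simp [smul_eq_mul]
    rw [hfun]
    have hfd : fderiv ℝ
        (fun p : EE N => w p * fderiv ℝ Φ p (ex j) + Φ p * fderiv ℝ w p (ex j)) (x₀, t₀)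
        = (w (x₀, t₀) • fderiv ℝ (fun p : EE N => fderiv ℝ Φ p (ex j)) (x₀, t₀)
            + (fderiv ℝ Φ (x₀, t₀) (ex j)) • fderiv ℝ w (x₀, t₀))
          + (Φ (x₀, t₀) • fderiv ℝ (fun p : EE N => fderiv ℝ w p (ex j)) (x₀, t₀)
            + (fderiv ℝ w (x₀, t₀) (ex j)) • fderiv ℝ Φ (x₀, t₀)) := by
      rw [fderiv_fun_add ((hwd _).fun_mul (hGΦd j _)) ((hΦd _).fun_mul (hGwd j _)),
        fderiv_fun_mul (hwd _) (hGΦd j _), fderiv_fun_mul (hΦd _) (hGwd j _)]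
    rw [hfd, hgrad]
    simp only [smul_zero, ContinuousLinearMap.zero_apply, zero_smul, add_zero,
      ContinuousLinearMap.add_apply, ContinuousLinearMap.smul_apply, smul_eq_mul]
    rfl
  have hpdT : pdT ψ x₀ t₀ = w (x₀, t₀) * pdT φ x₀ t₀ := by
    rw [pdT_eq ψ x₀ t₀ (hPd _), pdT_eq φ x₀ t₀ (hΦd _)]
    rw [show (fun p : EE N => ψ p.1 p.2) = P from rfl,
      show (fun p : EE N => φ p.1 p.2) = Φ from rfl, hD1, hgrad]
    simp [smul_eq_mul]
  have hpdX : ∀ i, pdX i ψ x₀ t₀ = w (x₀, t₀) * pdX i φ x₀ t₀ := by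
    intro i
    rw [pdX_eq ψ x₀ t₀ i (hPd _), pdX_eq φ x₀ t₀ i (hΦd _)]
    rw [show (fun p : EE N => ψ p.1 p.2) = P from rfl,
      show (fun p : EE N => φ p.1 p.2) = Φ from rfl, hD1, hgrad]
    simp [smul_eq_mul]
  have hval : ψ x₀ t₀ = w (x₀, t₀) * φ x₀ t₀ := by
    have : P (x₀, t₀) = w (x₀, t₀) * Φ (x₀, t₀) := by rw [hP_eq]
    exact this
  -- nonnegativity of the elliptic pairing
  obtain ⟨θ₀, hθ₀, hell'⟩ := hell
  have hS : 0 ≤ ∑ i, ∑ j, a x₀ t₀ i j *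
      fderiv ℝ (fun p : EE N => fderiv ℝ w p (ex j)) (x₀, t₀) (ex i) := by
    refine quad_pairing_nonneg (fun i j => a x₀ t₀ i j)
      (fun i j => fderiv ℝ (fun p : EE N => fderiv ℝ w p (ex j)) (x₀, t₀) (ex i))
      (fun i j => hsym x₀ t₀ i j) ?_ ?_
    · intro ξ
      calc (0:ℝ) ≤ θ₀ * ∑ i, (ξ i) ^ 2 :=
            mul_nonneg hθ₀.le (Finset.sum_nonneg fun i _ => sq_nonneg _)
        _ ≤ ∑ i, ∑ j, a x₀ t₀ i j * ξ i * ξ j := hell' x₀ t₀ ξ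
    · intro ξ
      exact hH ξ
  -- conclude
  refine ⟨(x₀, t₀), hp₀D, ?_⟩
  have hLφ := hφ_eq x₀ t₀
  unfold Lop at hLφ ⊢
  dsimp only
  rw [hpdT, hval]
  have hsum1 : ∑ i, ∑ j, a x₀ t₀ i j * pdX i (pdX j ψ) x₀ t₀
      = w (x₀, t₀) * (∑ i, ∑ j, a x₀ t₀ i j * pdX i (pdX j φ) x₀ t₀)
        + Φ (x₀, t₀) * (∑ i, ∑ j, a x₀ t₀ i j *
            fderiv ℝ (fun p : EE N => fderiv ℝ w p (ex j)) (x₀, t₀) (ex i)) := by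
    rw [Finset.mul_sum, Finset.mul_sum, ← Finset.sum_add_distrib]
    refine Finset.sum_congr rfl fun i _ => ?_
    rw [Finset.mul_sum, Finset.mul_sum, ← Finset.sum_add_distrib]
    refine Finset.sum_congr rfl fun j _ => ?_
    rw [hHP i j]; ring
  have hsum2 : ∑ i, bb x₀ t₀ i * pdX i ψ x₀ t₀
      = w (x₀, t₀) * ∑ i, bb x₀ t₀ i * pdX i φ x₀ t₀ := by
    rw [Finset.mul_sum]
    exact Finset.sum_congr rfl fun i _ => by rw [hpdX i]; ring
  rw [hsum1, hsum2]
  have hΦ₀ : 0 < Φ (x₀, t₀) := hΦpos _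
  have hkey := congrArg (HMul.hMul (w (x₀, t₀))) hLφ
  linarith [mul_nonneg hΦ₀.le hS, hkey]


end Aux

/-- min-max (variational) characterization of the principal eigenvalue of a
periodic-parabolic operator: `μ = inf_{ψ ∈ E⁺} sup_{(x,t) ∈ D} (L ψ)/ψ`. -/
theorem statement16 {N : ℕ} (hN : 1 ≤ N) (T : ℝ) (hT : 0 < T)
    (a : (Fin N → ℝ) → ℝ → Fin N → Fin N → ℝ)
    (bb : (Fin N → ℝ) → ℝ → Fin N → ℝ) (cc : (Fin N → ℝ) → ℝ → ℝ)
    (ha_cont : Continuous (fun p : (Fin N → ℝ) × ℝ => a p.1 p.2))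
    (hb_cont : Continuous (fun p : (Fin N → ℝ) × ℝ => bb p.1 p.2))
    (hc_cont : Continuous (fun p : (Fin N → ℝ) × ℝ => cc p.1 p.2))
    (ha_perx : ∀ x t i, a (x + Pi.single i 1) t = a x t)
    (ha_pert : ∀ x t, a x (t + T) = a x t)
    (hb_perx : ∀ x t i, bb (x + Pi.single i 1) t = bb x t)
    (hb_pert : ∀ x t, bb x (t + T) = bb x t)
    (hc_perx : ∀ x t i, cc (x + Pi.single i 1) t = cc x t)
    (hc_pert : ∀ x t, cc x (t + T) = cc x t)
    (hsym : ∀ x t i j, a x t i j = a x t j i)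
    (hell : ∃ θ₀ > (0 : ℝ), ∀ x t (ξ : Fin N → ℝ),
      θ₀ * (∑ i, (ξ i) ^ 2) ≤ ∑ i, ∑ j, a x t i j * ξ i * ξ j)
    (φ : (Fin N → ℝ) → ℝ → ℝ) (μ : ℝ)
    (hφ_smooth : ContDiff ℝ 2 (fun p : (Fin N → ℝ) × ℝ => φ p.1 p.2))
    (hφ_pos : ∀ x t, 0 < φ x t)
    (hφ_perx : ∀ x t i, φ (x + Pi.single i 1) t = φ x t)
    (hφ_pert : ∀ x t, φ x (t + T) = φ x t)
    (hφ_eq : ∀ x t, Lop a bb cc φ x t = μ * φ x t) :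
    μ = sInf { m : ℝ | ∃ ψ : (Fin N → ℝ) → ℝ → ℝ,
      ContDiff ℝ 2 (fun p : (Fin N → ℝ) × ℝ => ψ p.1 p.2) ∧
      (∀ x t, 0 < ψ x t) ∧
      (∀ x t i, ψ (x + Pi.single i 1) t = ψ x t) ∧
      (∀ x t, ψ x (t + T) = ψ x t) ∧
      m = sSup ((fun p : (Fin N → ℝ) × ℝ => Lop a bb cc ψ p.1 p.2 / ψ p.1 p.2) ''
        ((Icc (0 : Fin N → ℝ) 1) ×ˢ (Icc (0 : ℝ) T))) } := by
  classical
  set D : Set (EE N) := (Icc (0 : Fin N → ℝ) 1) ×ˢ (Icc (0 : ℝ) T) with hDdef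
  have hDcomp : IsCompact D := isCompact_Icc.prod isCompact_Icc
  have hD0 : ((0 : Fin N → ℝ), (0 : ℝ)) ∈ D :=
    ⟨⟨le_refl _, fun i => zero_le_one⟩, ⟨le_refl _, hT.le⟩⟩
  set S : Set ℝ := { m : ℝ | ∃ ψ : (Fin N → ℝ) → ℝ → ℝ,
      ContDiff ℝ 2 (fun p : (Fin N → ℝ) × ℝ => ψ p.1 p.2) ∧
      (∀ x t, 0 < ψ x t) ∧
      (∀ x t i, ψ (x + Pi.single i 1) t = ψ x t) ∧
      (∀ x t, ψ x (t + T) = ψ x t) ∧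
      m = sSup ((fun p : (Fin N → ℝ) × ℝ => Lop a bb cc ψ p.1 p.2 / ψ p.1 p.2) '' D) }
    with hSdef
  have hmem : μ ∈ S := by
    refine ⟨φ, hφ_smooth, hφ_pos, hφ_perx, hφ_pert, ?_⟩
    have himg : (fun p : (Fin N → ℝ) × ℝ => Lop a bb cc φ p.1 p.2 / φ p.1 p.2) '' D
        = {μ} := by
      apply Subset.antisymm
      · rintro y ⟨p, hp, rfl⟩
        simp only [mem_singleton_iff]
        rw [hφ_eq p.1 p.2]
        exact mul_div_cancel_right₀ μ (hφ_pos p.1 p.2).ne'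
      · rintro y hy
        rw [mem_singleton_iff] at hy
        subst hy
        refine ⟨((0 : Fin N → ℝ), (0 : ℝ)), hD0, ?_⟩
        show Lop a bb cc φ 0 0 / φ 0 0 = y
        rw [hφ_eq 0 0, mul_div_cancel_right₀ y (hφ_pos 0 0).ne']
      
    rw [himg, csSup_singleton]
  have hlb : ∀ m ∈ S, μ ≤ m := by
    rintro m ⟨ψ, hsm, hpos, hperx, hpert, rfl⟩
    obtain ⟨p₀, hp₀, hineq⟩ := core hT a bb cc hsym hell φ μ hφ_smooth hφ_pos hφ_eq
      ψ hsm hpos hperx hpert hφ_perx hφ_pert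
    have hψ₀ : 0 < ψ p₀.1 p₀.2 := hpos _ _
    have h1 : μ ≤ Lop a bb cc ψ p₀.1 p₀.2 / ψ p₀.1 p₀.2 := by
      rw [le_div_iff₀ hψ₀]
      linarith
    have hcont : Continuous (fun p : EE N => Lop a bb cc ψ p.1 p.2 / ψ p.1 p.2) :=
      (continuous_Lop ψ a bb cc ha_cont hb_cont hc_cont hsm).div hsm.continuous
        (fun p => (hpos p.1 p.2).ne')
    have hbdd : BddAbove ((fun p : EE N => Lop a bb cc ψ p.1 p.2 / ψ p.1 p.2) '' D) :=
      hDcomp.bddAbove_image hcont.continuousOn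
    exact h1.trans (le_csSup hbdd ⟨p₀, hp₀, rfl⟩)
  exact le_antisymm (le_csInf ⟨μ, hmem⟩ hlb) (csInf_le ⟨μ, fun m hm => hlb m hm⟩ hmem)
end
end

section
/- Let b be a smooth vector field, 1-periodic in x and t and spatially divergence-free, k ∈ ℝ^N a unit vector, and c₀ ∈ ℝ. For λ ∈ ℝ, call (μ, φ) an eigenpair at λ if φ(x,t) > 0 is smooth, 1-periodic in each component of x and in t, and Δ_x φ + (b − 2λk)·∇_x φ + (λ² − λ(b·k) + c₀)φ − φ_t = μφ pointwise. Suppose λ, γ ∈ ℝ and (μ₁, φ₁), (μ₂, φ₂), (μ₀, φ₀) are eigenpairs at λ, γ, and (λ+γ)/2 respectively. Then μ₀ ≤ (μ₁ + μ₂)/2; that is, the principal eigenvalue μ(λ) is a convex function of λ. -/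
open MeasureTheory Filter Set

noncomputable section

namespace S17

open Topology

lemma per_int {f : ℝ → ℝ} (h : ∀ s, f (s + 1) = f s) (s : ℝ) (n : ℤ) : f (s + n) = f s := by
  induction n using Int.induction_on with
  | zero => simp
  | succ m ih =>
      push_cast
      push_cast at ih
      rw [show s + ((m : ℝ) + 1) = s + (m : ℝ) + 1 by ring, h, ih]
  | pred m ih =>
      push_cast
      push_cast at ih
      have h2 := h (s + (-(m : ℝ) - 1))
      rw [show s + (-(m : ℝ) - 1) + 1 = s + -(m : ℝ) by ring] at h2
      rw [show s + (-(m : ℝ) - 1) = s + (-(m:ℝ) - 1) by ring, ← h2, ih]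

lemma per_int_vec {N : ℕ} {u : (Fin N → ℝ) → ℝ}
    (h : ∀ x i, u (x + Pi.single i 1) = u x) (x : Fin N → ℝ) (n : Fin N → ℤ) :
    u (x + fun i => (n i : ℝ)) = u x := by
  have single : ∀ (y : Fin N → ℝ) (i : Fin N) (m : ℤ), u (y + Pi.single i (m : ℝ)) = u y := by
    intro y i m
    induction m using Int.induction_on with
    | zero => simp
    | succ m ih =>
        push_cast
        rw [show ((m : ℝ) + 1) = (m : ℝ) + 1 from rfl, Pi.single_add,
          ← add_assoc, h]
        push_cast at ih
        exact ih
    | pred m ih =>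
        push_cast
        push_cast at ih
        have h2 := h (y + Pi.single i (-(m : ℝ) - 1)) i
        rw [add_assoc, ← Pi.single_add, show (-(m:ℝ) - 1 + 1) = -(m:ℝ) by ring] at h2
        rw [← h2, ih]
  have key : ∀ (s : Finset (Fin N)) (y : Fin N → ℝ),
      u (y + ∑ i ∈ s, Pi.single i ((n i : ℝ))) = u y := by
    intro s
    induction s using Finset.induction_on with
    | empty => intro y; simp
    | insert a s' hi ih =>
        intro y
        rw [Finset.sum_insert hi, ← add_assoc, ih, single]
  have h2 := key Finset.univ x
  rwa [show (∑ i, Pi.single i ((n i : ℝ))) = fun i => (n i : ℝ) from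
    Finset.univ_sum_single _] at h2

lemma cdiff {f : ℝ → ℝ} (hf : ContDiff ℝ (⊤ : ℕ∞) f) : Differentiable ℝ f :=
  hf.differentiable (by simp)

lemma deriv2_nonpos_of_localMax {f : ℝ → ℝ} {a : ℝ}
    (hf : ContDiff ℝ (⊤ : ℕ∞) f) (hmax : IsLocalMax f a) :
    deriv (deriv f) a ≤ 0 := by
  by_contra hpos
  push_neg at hpos
  have hdf : ContDiff ℝ (⊤ : ℕ∞) (deriv f) := (contDiff_infty_iff_deriv.mp hf).2
  have h0 : deriv f a = 0 := hmax.deriv_eq_zero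
  have hd : HasDerivAt (deriv f) (deriv (deriv f) a) a :=
    (cdiff hdf a).hasDerivAt
  have hslope := hasDerivAt_iff_tendsto_slope.mp hd
  have hev : ∀ᶠ x in 𝓝[>] a, 0 < slope (deriv f) a x := by
    have h1 : ∀ᶠ x in 𝓝[≠] a, 0 < slope (deriv f) a x :=
      hslope.eventually_const_lt hpos
    exact h1.filter_mono (nhdsWithin_mono a fun x hx => ne_of_gt hx)
  have hev2 : ∀ᶠ x in 𝓝[>] a, 0 < deriv f x := by
    filter_upwards [hev, self_mem_nhdsWithin] with x hx hx'
    have hxa : a < x := hx'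
    have hs : deriv f x = slope (deriv f) a x * (x - a) := by
      rw [slope_def_field, h0]
      rw [sub_zero, div_mul_cancel₀ _ (by linarith : x - a ≠ 0)]
    rw [hs]
    exact mul_pos hx (by linarith)
  rw [Filter.eventually_iff] at hev2
  obtain ⟨u, hu, hsub⟩ := mem_nhdsGT_iff_exists_Ioo_subset.mp hev2
  have hmono : StrictMonoOn f (Icc a u) :=
    strictMonoOn_of_deriv_pos (convex_Icc a u) ((hf.continuous).continuousOn)
      (by intro x hx; rw [interior_Icc] at hx; exact hsub hx)
  have hevIoo : ∀ᶠ x in 𝓝[>] a, x ∈ Ioo a u :=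
    Filter.eventually_iff.mpr (Ioo_mem_nhdsGT_of_mem ⟨le_refl a, hu⟩)
  have hevMax : ∀ᶠ x in 𝓝[>] a, f x ≤ f a := hmax.filter_mono nhdsWithin_le_nhds
  obtain ⟨x, hx1, hx2⟩ := (hevIoo.and hevMax).exists
  exact absurd (hmono (left_mem_Icc.mpr (le_of_lt hu)) ⟨hx1.1.le, hx1.2.le⟩ hx1.1)
    (not_lt.mpr hx2)

lemma sliceX_contDiff {N : ℕ} {Φ : (Fin N → ℝ) → ℝ → ℝ}
    (hΦ : ContDiff ℝ (⊤ : ℕ∞) (fun p : (Fin N → ℝ) × ℝ => Φ p.1 p.2))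
    (x : Fin N → ℝ) (t : ℝ) (i : Fin N) :
    ContDiff ℝ (⊤ : ℕ∞) (fun z => Φ (Function.update x i z) t) :=
  hΦ.comp ((contDiff_update _ x i).prodMk contDiff_const)

lemma sliceT_contDiff {N : ℕ} {Φ : (Fin N → ℝ) → ℝ → ℝ}
    (hΦ : ContDiff ℝ (⊤ : ℕ∞) (fun p : (Fin N → ℝ) × ℝ => Φ p.1 p.2))
    (x : Fin N → ℝ) :
    ContDiff ℝ (⊤ : ℕ∞) (fun z => Φ x z) :=
  hΦ.comp (contDiff_const.prodMk contDiff_id)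

lemma pdX_update_eq {N : ℕ} (i : Fin N) (Φ : (Fin N → ℝ) → ℝ → ℝ) (x : Fin N → ℝ)
    (t : ℝ) (z : ℝ) :
    pdX i Φ (Function.update x i z) t = deriv (fun w => Φ (Function.update x i w) t) z := by
  simp only [pdX, Function.update_idem, Function.update_self]

end S17

/-- convexity of the principal eigenvalue `λ ↦ μ(λ)` of the
periodic-parabolic operator `L^λ`: if `(μ₁,φ₁)`, `(μ₂,φ₂)`, `(μ₀,φ₀)` are eigenpairs at
`λ`, `γ`, `(λ+γ)/2`, then `μ₀ ≤ (μ₁+μ₂)/2`. -/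
theorem statement17 {N : ℕ} (hN : 1 ≤ N) (k : Fin N → ℝ) (hk : IsUnitVector k)
    (b : (Fin N → ℝ) → ℝ → (Fin N → ℝ)) (hb : IsAdmissibleField b)
    (c₀ : ℝ) (lam gam : ℝ)
    (μ₁ μ₂ μ₀ : ℝ)
    (Φ₁ Φ₂ Φ₀ : (Fin N → ℝ) → ℝ → ℝ)
    (h₁ : IsEigenpair b k c₀ lam μ₁ Φ₁)
    (h₂ : IsEigenpair b k c₀ gam μ₂ Φ₂)
    (h₀ : IsEigenpair b k c₀ ((lam + gam) / 2) μ₀ Φ₀) :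
    μ₀ ≤ (μ₁ + μ₂) / 2 := by
  obtain ⟨hs₀, hpos₀, hpx₀, hpt₀, heq₀⟩ := h₀
  obtain ⟨hs₁, hpos₁, hpx₁, hpt₁, heq₁⟩ := h₁
  obtain ⟨hs₂, hpos₂, hpx₂, hpt₂, heq₂⟩ := h₂
  have hs₀' : ContDiff ℝ (⊤ : ℕ∞) (fun p : (Fin N → ℝ) × ℝ => Φ₀ p.1 p.2) := hs₀.of_le (by simp)
  have hs₁' : ContDiff ℝ (⊤ : ℕ∞) (fun p : (Fin N → ℝ) × ℝ => Φ₁ p.1 p.2) := hs₁.of_le (by simp)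
  have hs₂' : ContDiff ℝ (⊤ : ℕ∞) (fun p : (Fin N → ℝ) × ℝ => Φ₂ p.1 p.2) := hs₂.of_le (by simp)
  set v : (Fin N → ℝ) → ℝ → ℝ := fun x t =>
    Real.log (Φ₀ x t) - (Real.log (Φ₁ x t) + Real.log (Φ₂ x t)) / 2 with hv
  have hvc : Continuous (fun p : (Fin N → ℝ) × ℝ => v p.1 p.2) := by
    simp only [hv]
    exact ((hs₀'.continuous.log fun p => (hpos₀ p.1 p.2).ne').sub
      (((hs₁'.continuous.log fun p => (hpos₁ p.1 p.2).ne').add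
        (hs₂'.continuous.log fun p => (hpos₂ p.1 p.2).ne')).div_const 2))
  have hK : IsCompact ((Icc (0 : Fin N → ℝ) 1) ×ˢ (Icc (0 : ℝ) 1)) :=
    isCompact_Icc.prod isCompact_Icc
  have hKne : ((Icc (0 : Fin N → ℝ) 1) ×ˢ (Icc (0 : ℝ) 1)).Nonempty :=
    ⟨(0, 0), ⟨⟨le_refl _, fun i => zero_le_one⟩, ⟨le_refl _, zero_le_one⟩⟩⟩
  obtain ⟨p₀, hp₀K, hmax⟩ := hK.exists_isMaxOn hKne hvc.continuousOn
  obtain ⟨x₀, t₀⟩ := p₀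
  have hvpx : ∀ (x : Fin N → ℝ) (t : ℝ) (i : Fin N), v (x + Pi.single i 1) t = v x t := by
    intro x t i; simp only [hv]; rw [hpx₀, hpx₁, hpx₂]
  have hvpt : ∀ (x : Fin N → ℝ) (t : ℝ), v x (t + 1) = v x t := by
    intro x t; simp only [hv]; rw [hpt₀, hpt₁, hpt₂]
  have hglob : ∀ x t, v x t ≤ v x₀ t₀ := by
    intro x t
    have h1 : v x t = v (fun i => Int.fract (x i)) t := by
      have h2 := S17.per_int_vec (u := fun y => v y t) (fun y i => hvpx y t i)
        (fun i => Int.fract (x i)) (fun i => ⌊x i⌋)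
      have h3 : ((fun i => Int.fract (x i)) + fun i => ((⌊x i⌋ : ℤ) : ℝ)) = x := by
        funext i
        simp only [Pi.add_apply, Int.fract]
        ring
      rw [h3] at h2
      exact h2
    have h4 : v (fun i => Int.fract (x i)) t = v (fun i => Int.fract (x i)) (Int.fract t) := by
      have h5 := S17.per_int (f := fun z => v (fun i => Int.fract (x i)) z)
        (fun z => hvpt _ z) (Int.fract t) ⌊t⌋
      rw [show Int.fract t + (⌊t⌋ : ℝ) = t by rw [Int.fract]; ring] at h5
      exact h5
    rw [h1, h4]
    refine isMaxOn_iff.mp hmax ((fun i => Int.fract (x i)), Int.fract t)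
      (Set.mem_prod.mpr ⟨Set.mem_Icc.mpr ⟨?_, ?_⟩, Set.mem_Icc.mpr ⟨?_, ?_⟩⟩)
    · exact Pi.le_def.mpr fun i => Int.fract_nonneg _
    · exact Pi.le_def.mpr fun i => (Int.fract_lt_one _).le
    · exact Int.fract_nonneg _
    · exact (Int.fract_lt_one _).le
  -- per-coordinate first and second order conditions at the maximum
  have hkey : ∀ i : Fin N,
      (pdX i Φ₀ x₀ t₀ / Φ₀ x₀ t₀
        = (pdX i Φ₁ x₀ t₀ / Φ₁ x₀ t₀ + pdX i Φ₂ x₀ t₀ / Φ₂ x₀ t₀) / 2) ∧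
      (pdX i (pdX i Φ₀) x₀ t₀ / Φ₀ x₀ t₀ - (pdX i Φ₀ x₀ t₀ / Φ₀ x₀ t₀) ^ 2
        - ((pdX i (pdX i Φ₁) x₀ t₀ / Φ₁ x₀ t₀ - (pdX i Φ₁ x₀ t₀ / Φ₁ x₀ t₀) ^ 2)
          + (pdX i (pdX i Φ₂) x₀ t₀ / Φ₂ x₀ t₀ - (pdX i Φ₂ x₀ t₀ / Φ₂ x₀ t₀) ^ 2)) / 2 ≤ 0) := by
    intro i
    set g₀ : ℝ → ℝ := fun z => Φ₀ (Function.update x₀ i z) t₀ with hg₀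
    set g₁ : ℝ → ℝ := fun z => Φ₁ (Function.update x₀ i z) t₀ with hg₁
    set g₂ : ℝ → ℝ := fun z => Φ₂ (Function.update x₀ i z) t₀ with hg₂
    have hc₀ : ContDiff ℝ (⊤ : ℕ∞) g₀ := S17.sliceX_contDiff hs₀' x₀ t₀ i
    have hc₁ : ContDiff ℝ (⊤ : ℕ∞) g₁ := S17.sliceX_contDiff hs₁' x₀ t₀ i
    have hc₂ : ContDiff ℝ (⊤ : ℕ∞) g₂ := S17.sliceX_contDiff hs₂' x₀ t₀ i
    have hp₀ : ∀ z, 0 < g₀ z := fun z => hpos₀ _ _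
    have hp₁ : ∀ z, 0 < g₁ z := fun z => hpos₁ _ _
    have hp₂ : ∀ z, 0 < g₂ z := fun z => hpos₂ _ _
    have hdc₀ : ContDiff ℝ (⊤ : ℕ∞) (deriv g₀) := (contDiff_infty_iff_deriv.mp hc₀).2
    have hdc₁ : ContDiff ℝ (⊤ : ℕ∞) (deriv g₁) := (contDiff_infty_iff_deriv.mp hc₁).2
    have hdc₂ : ContDiff ℝ (⊤ : ℕ∞) (deriv g₂) := (contDiff_infty_iff_deriv.mp hc₂).2
    have hWc : ContDiff ℝ (⊤ : ℕ∞)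
        (fun z => Real.log (g₀ z) - (Real.log (g₁ z) + Real.log (g₂ z)) / 2) :=
      ((hc₀.log fun z => (hp₀ z).ne').sub
        (((hc₁.log fun z => (hp₁ z).ne').add (hc₂.log fun z => (hp₂ z).ne')).div_const 2))
    have hWmax : IsLocalMax
        (fun z => Real.log (g₀ z) - (Real.log (g₁ z) + Real.log (g₂ z)) / 2) (x₀ i) := by
      refine Filter.Eventually.of_forall fun z => ?_
      show Real.log (g₀ z) - (Real.log (g₁ z) + Real.log (g₂ z)) / 2
          ≤ Real.log (g₀ (x₀ i)) - (Real.log (g₁ (x₀ i)) + Real.log (g₂ (x₀ i))) / 2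
      have e1 : Real.log (g₀ z) - (Real.log (g₁ z) + Real.log (g₂ z)) / 2
          = v (Function.update x₀ i z) t₀ := by
        simp only [hg₀, hg₁, hg₂, hv]
      have e2 : Real.log (g₀ (x₀ i)) - (Real.log (g₁ (x₀ i)) + Real.log (g₂ (x₀ i))) / 2
          = v x₀ t₀ := by
        simp only [hg₀, hg₁, hg₂, hv, Function.update_eq_self]
      rw [e1, e2]
      exact hglob _ _
    have hdW : deriv (fun z => Real.log (g₀ z) - (Real.log (g₁ z) + Real.log (g₂ z)) / 2)
        = fun z => deriv g₀ z / g₀ z - (deriv g₁ z / g₁ z + deriv g₂ z / g₂ z) / 2 := by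
      funext z
      have d₀ : HasDerivAt (fun w => Real.log (g₀ w)) (deriv g₀ z / g₀ z) z :=
        ((S17.cdiff hc₀ z).hasDerivAt).log (hp₀ z).ne'
      have d₁ : HasDerivAt (fun w => Real.log (g₁ w)) (deriv g₁ z / g₁ z) z :=
        ((S17.cdiff hc₁ z).hasDerivAt).log (hp₁ z).ne'
      have d₂ : HasDerivAt (fun w => Real.log (g₂ w)) (deriv g₂ z / g₂ z) z :=
        ((S17.cdiff hc₂ z).hasDerivAt).log (hp₂ z).ne'
      exact (d₀.sub ((d₁.add d₂).div_const 2)).deriv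
    have hfst0 : deriv g₀ (x₀ i) / g₀ (x₀ i)
        - (deriv g₁ (x₀ i) / g₁ (x₀ i) + deriv g₂ (x₀ i) / g₂ (x₀ i)) / 2 = 0 := by
      have h := hWmax.deriv_eq_zero
      rw [hdW] at h
      exact h
    have hsnd0 := S17.deriv2_nonpos_of_localMax hWc hWmax
    rw [hdW] at hsnd0
    have hq₀ : DifferentiableAt ℝ (fun z => deriv g₀ z / g₀ z) (x₀ i) :=
      (S17.cdiff hdc₀ (x₀ i)).div (S17.cdiff hc₀ (x₀ i)) (hp₀ _).ne'
    have hq₁ : DifferentiableAt ℝ (fun z => deriv g₁ z / g₁ z) (x₀ i) :=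
      (S17.cdiff hdc₁ (x₀ i)).div (S17.cdiff hc₁ (x₀ i)) (hp₁ _).ne'
    have hq₂ : DifferentiableAt ℝ (fun z => deriv g₂ z / g₂ z) (x₀ i) :=
      (S17.cdiff hdc₂ (x₀ i)).div (S17.cdiff hc₂ (x₀ i)) (hp₂ _).ne'
    have hD₀ : deriv (fun z => deriv g₀ z / g₀ z) (x₀ i)
        = (deriv (deriv g₀) (x₀ i) * g₀ (x₀ i) - deriv g₀ (x₀ i) * deriv g₀ (x₀ i))
          / g₀ (x₀ i) ^ 2 :=
      (((S17.cdiff hdc₀ (x₀ i)).hasDerivAt).div ((S17.cdiff hc₀ (x₀ i)).hasDerivAt)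
        (hp₀ _).ne').deriv
    have hD₁ : deriv (fun z => deriv g₁ z / g₁ z) (x₀ i)
        = (deriv (deriv g₁) (x₀ i) * g₁ (x₀ i) - deriv g₁ (x₀ i) * deriv g₁ (x₀ i))
          / g₁ (x₀ i) ^ 2 :=
      (((S17.cdiff hdc₁ (x₀ i)).hasDerivAt).div ((S17.cdiff hc₁ (x₀ i)).hasDerivAt)
        (hp₁ _).ne').deriv
    have hD₂ : deriv (fun z => deriv g₂ z / g₂ z) (x₀ i)
        = (deriv (deriv g₂) (x₀ i) * g₂ (x₀ i) - deriv g₂ (x₀ i) * deriv g₂ (x₀ i))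
          / g₂ (x₀ i) ^ 2 :=
      (((S17.cdiff hdc₂ (x₀ i)).hasDerivAt).div ((S17.cdiff hc₂ (x₀ i)).hasDerivAt)
        (hp₂ _).ne').deriv
    have hsnd1 : deriv (fun z => deriv g₀ z / g₀ z
          - (deriv g₁ z / g₁ z + deriv g₂ z / g₂ z) / 2) (x₀ i)
        = deriv (fun z => deriv g₀ z / g₀ z) (x₀ i)
          - (deriv (fun z => deriv g₁ z / g₁ z) (x₀ i)
            + deriv (fun z => deriv g₂ z / g₂ z) (x₀ i)) / 2 :=
      ((hq₀.hasDerivAt).sub (((hq₁.hasDerivAt).add (hq₂.hasDerivAt)).div_const 2)).deriv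
    rw [hsnd1, hD₀, hD₁, hD₂] at hsnd0
    have e₀ : g₀ (x₀ i) = Φ₀ x₀ t₀ := by rw [hg₀]; simp [Function.update_eq_self]
    have e₁ : g₁ (x₀ i) = Φ₁ x₀ t₀ := by rw [hg₁]; simp [Function.update_eq_self]
    have e₂ : g₂ (x₀ i) = Φ₂ x₀ t₀ := by rw [hg₂]; simp [Function.update_eq_self]
    have f₀ : deriv g₀ (x₀ i) = pdX i Φ₀ x₀ t₀ := by rw [hg₀]; rfl
    have f₁ : deriv g₁ (x₀ i) = pdX i Φ₁ x₀ t₀ := by rw [hg₁]; rfl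
    have f₂ : deriv g₂ (x₀ i) = pdX i Φ₂ x₀ t₀ := by rw [hg₂]; rfl
    have ff₀ : deriv (deriv g₀) (x₀ i) = pdX i (pdX i Φ₀) x₀ t₀ := by
      have hfe : (fun z => pdX i Φ₀ (Function.update x₀ i z) t₀) = deriv g₀ := by
        funext w
        rw [hg₀]
        exact S17.pdX_update_eq i Φ₀ x₀ t₀ w
      rw [← hfe]
      rfl
    have ff₁ : deriv (deriv g₁) (x₀ i) = pdX i (pdX i Φ₁) x₀ t₀ := by
      have hfe : (fun z => pdX i Φ₁ (Function.update x₀ i z) t₀) = deriv g₁ := by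
        funext w
        rw [hg₁]
        exact S17.pdX_update_eq i Φ₁ x₀ t₀ w
      rw [← hfe]
      rfl
    have ff₂ : deriv (deriv g₂) (x₀ i) = pdX i (pdX i Φ₂) x₀ t₀ := by
      have hfe : (fun z => pdX i Φ₂ (Function.update x₀ i z) t₀) = deriv g₂ := by
        funext w
        rw [hg₂]
        exact S17.pdX_update_eq i Φ₂ x₀ t₀ w
      rw [← hfe]
      rfl
    rw [e₀, e₁, e₂, f₀, f₁, f₂] at hfst0
    rw [ff₀, ff₁, ff₂, e₀, e₁, e₂, f₀, f₁, f₂] at hsnd0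
    constructor
    · linarith [hfst0]
    · have keyq : ∀ (dd d P : ℝ), 0 < P →
          (dd * P - d * d) / P ^ 2 = dd / P - (d / P) ^ 2 := by
        intro dd d P hP
        field_simp
      rw [keyq _ _ _ (hpos₀ x₀ t₀), keyq _ _ _ (hpos₁ x₀ t₀), keyq _ _ _ (hpos₂ x₀ t₀)] at hsnd0
      linarith [hsnd0]
  -- time derivative condition at the maximum
  have hM3 : pdT Φ₀ x₀ t₀ / Φ₀ x₀ t₀
      - (pdT Φ₁ x₀ t₀ / Φ₁ x₀ t₀ + pdT Φ₂ x₀ t₀ / Φ₂ x₀ t₀) / 2 = 0 := by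
    have hTmax : IsLocalMax (fun z => v x₀ z) t₀ :=
      Filter.Eventually.of_forall fun z => hglob x₀ z
    have hzero := hTmax.deriv_eq_zero
    have d₀ : HasDerivAt (fun z => Real.log (Φ₀ x₀ z)) (pdT Φ₀ x₀ t₀ / Φ₀ x₀ t₀) t₀ :=
      ((S17.cdiff (S17.sliceT_contDiff hs₀' x₀) t₀).hasDerivAt).log (hpos₀ _ _).ne'
    have d₁ : HasDerivAt (fun z => Real.log (Φ₁ x₀ z)) (pdT Φ₁ x₀ t₀ / Φ₁ x₀ t₀) t₀ :=
      ((S17.cdiff (S17.sliceT_contDiff hs₁' x₀) t₀).hasDerivAt).log (hpos₁ _ _).ne'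
    have d₂ : HasDerivAt (fun z => Real.log (Φ₂ x₀ z)) (pdT Φ₂ x₀ t₀ / Φ₂ x₀ t₀) t₀ :=
      ((S17.cdiff (S17.sliceT_contDiff hs₂' x₀) t₀).hasDerivAt).log (hpos₂ _ _).ne'
    have hD : deriv (fun z => Real.log (Φ₀ x₀ z) - (Real.log (Φ₁ x₀ z) + Real.log (Φ₂ x₀ z)) / 2) t₀
        = pdT Φ₀ x₀ t₀ / Φ₀ x₀ t₀ - (pdT Φ₁ x₀ t₀ / Φ₁ x₀ t₀ + pdT Φ₂ x₀ t₀ / Φ₂ x₀ t₀) / 2 :=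
      (d₀.sub ((d₁.add d₂).div_const 2)).deriv
    have hfe : (fun z => v x₀ z)
        = fun z => Real.log (Φ₀ x₀ z) - (Real.log (Φ₁ x₀ z) + Real.log (Φ₂ x₀ z)) / 2 := by
      funext z; simp only [hv]
    rw [hfe] at hzero
    rw [hzero] at hD
    linarith [hD]
  -- normalized eigenvalue equations at the maximum point
  have hEgen : ∀ (Φ : (Fin N → ℝ) → ℝ → ℝ) (lj mj : ℝ),
      (∀ x t, 0 < Φ x t) →
      ((∑ i, pdX i (pdX i Φ) x₀ t₀)
        + (∑ i, (b x₀ t₀ i - 2 * lj * k i) * pdX i Φ x₀ t₀)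
        + (lj ^ 2 - lj * (∑ i, b x₀ t₀ i * k i) + c₀) * Φ x₀ t₀ - pdT Φ x₀ t₀
        = mj * Φ x₀ t₀) →
      (∑ i, pdX i (pdX i Φ) x₀ t₀ / Φ x₀ t₀)
        + (∑ i, b x₀ t₀ i * (pdX i Φ x₀ t₀ / Φ x₀ t₀))
        - 2 * lj * (∑ i, k i * (pdX i Φ x₀ t₀ / Φ x₀ t₀))
        + (lj ^ 2 - lj * (∑ i, b x₀ t₀ i * k i) + c₀)
        - pdT Φ x₀ t₀ / Φ x₀ t₀ = mj := by
    intro Φ lj mj hpos heq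
    have hP : Φ x₀ t₀ ≠ 0 := (hpos x₀ t₀).ne'
    have h4 : (∑ i, (b x₀ t₀ i - 2 * lj * k i) * pdX i Φ x₀ t₀)
        = (∑ i, b x₀ t₀ i * pdX i Φ x₀ t₀) - 2 * lj * (∑ i, k i * pdX i Φ x₀ t₀) := by
      rw [Finset.mul_sum, ← Finset.sum_sub_distrib]
      exact Finset.sum_congr rfl fun i _ => by ring
    rw [h4] at heq
    have h1 : (∑ i, pdX i (pdX i Φ) x₀ t₀ / Φ x₀ t₀)
        = (∑ i, pdX i (pdX i Φ) x₀ t₀) / Φ x₀ t₀ := by rw [Finset.sum_div]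
    have h2 : (∑ i, b x₀ t₀ i * (pdX i Φ x₀ t₀ / Φ x₀ t₀))
        = (∑ i, b x₀ t₀ i * pdX i Φ x₀ t₀) / Φ x₀ t₀ := by
      rw [Finset.sum_div]
      exact Finset.sum_congr rfl fun i _ => by ring
    have h3 : (∑ i, k i * (pdX i Φ x₀ t₀ / Φ x₀ t₀))
        = (∑ i, k i * pdX i Φ x₀ t₀) / Φ x₀ t₀ := by
      rw [Finset.sum_div]
      exact Finset.sum_congr rfl fun i _ => by ring
    rw [h1, h2, h3]
    field_simp
    linear_combination heq
  have E₀ := hEgen Φ₀ ((lam + gam) / 2) μ₀ hpos₀ (heq₀ x₀ t₀)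
  have E₁ := hEgen Φ₁ lam μ₁ hpos₁ (heq₁ x₀ t₀)
  have E₂ := hEgen Φ₂ gam μ₂ hpos₂ (heq₂ x₀ t₀)
  -- sum versions of the first order condition
  have hR1 : (∑ i, b x₀ t₀ i * (pdX i Φ₀ x₀ t₀ / Φ₀ x₀ t₀))
      = (∑ i, b x₀ t₀ i * (pdX i Φ₁ x₀ t₀ / Φ₁ x₀ t₀)) / 2
        + (∑ i, b x₀ t₀ i * (pdX i Φ₂ x₀ t₀ / Φ₂ x₀ t₀)) / 2 := by
    rw [Finset.sum_div, Finset.sum_div, ← Finset.sum_add_distrib]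
    refine Finset.sum_congr rfl fun i _ => ?_
    rw [(hkey i).1]; ring
  have hR2 : (∑ i, k i * (pdX i Φ₀ x₀ t₀ / Φ₀ x₀ t₀))
      = (∑ i, k i * (pdX i Φ₁ x₀ t₀ / Φ₁ x₀ t₀)) / 2
        + (∑ i, k i * (pdX i Φ₂ x₀ t₀ / Φ₂ x₀ t₀)) / 2 := by
    rw [Finset.sum_div, Finset.sum_div, ← Finset.sum_add_distrib]
    refine Finset.sum_congr rfl fun i _ => ?_
    rw [(hkey i).1]; ring
  have hSQ : (∑ i, (pdX i Φ₀ x₀ t₀ / Φ₀ x₀ t₀) ^ 2)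
      = ((∑ i, (pdX i Φ₁ x₀ t₀ / Φ₁ x₀ t₀) ^ 2)
        + 2 * (∑ i, (pdX i Φ₁ x₀ t₀ / Φ₁ x₀ t₀) * (pdX i Φ₂ x₀ t₀ / Φ₂ x₀ t₀))
        + (∑ i, (pdX i Φ₂ x₀ t₀ / Φ₂ x₀ t₀) ^ 2)) / 4 := by
    rw [Finset.mul_sum, ← Finset.sum_add_distrib, ← Finset.sum_add_distrib, Finset.sum_div]
    refine Finset.sum_congr rfl fun i _ => ?_
    rw [(hkey i).1]; ring
  -- sum version of the second order condition
  have hM2 : (∑ i, pdX i (pdX i Φ₀) x₀ t₀ / Φ₀ x₀ t₀)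
      - (∑ i, (pdX i Φ₀ x₀ t₀ / Φ₀ x₀ t₀) ^ 2)
      - (((∑ i, pdX i (pdX i Φ₁) x₀ t₀ / Φ₁ x₀ t₀)
          - (∑ i, (pdX i Φ₁ x₀ t₀ / Φ₁ x₀ t₀) ^ 2))
        + ((∑ i, pdX i (pdX i Φ₂) x₀ t₀ / Φ₂ x₀ t₀)
          - (∑ i, (pdX i Φ₂ x₀ t₀ / Φ₂ x₀ t₀) ^ 2))) / 2 ≤ 0 := by
    have h := Finset.sum_nonpos (s := Finset.univ) fun i (_ : i ∈ Finset.univ) => (hkey i).2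
    have e : (∑ i, (pdX i (pdX i Φ₀) x₀ t₀ / Φ₀ x₀ t₀ - (pdX i Φ₀ x₀ t₀ / Φ₀ x₀ t₀) ^ 2
          - ((pdX i (pdX i Φ₁) x₀ t₀ / Φ₁ x₀ t₀ - (pdX i Φ₁ x₀ t₀ / Φ₁ x₀ t₀) ^ 2)
            + (pdX i (pdX i Φ₂) x₀ t₀ / Φ₂ x₀ t₀ - (pdX i Φ₂ x₀ t₀ / Φ₂ x₀ t₀) ^ 2)) / 2))
        = (∑ i, pdX i (pdX i Φ₀) x₀ t₀ / Φ₀ x₀ t₀)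
          - (∑ i, (pdX i Φ₀ x₀ t₀ / Φ₀ x₀ t₀) ^ 2)
          - (((∑ i, pdX i (pdX i Φ₁) x₀ t₀ / Φ₁ x₀ t₀)
              - (∑ i, (pdX i Φ₁ x₀ t₀ / Φ₁ x₀ t₀) ^ 2))
            + ((∑ i, pdX i (pdX i Φ₂) x₀ t₀ / Φ₂ x₀ t₀)
              - (∑ i, (pdX i Φ₂ x₀ t₀ / Φ₂ x₀ t₀) ^ 2))) / 2 := by
      simp only [Finset.sum_sub_distrib, ← Finset.sum_div, Finset.sum_add_distrib]
    linarith [h, e]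
  -- the completed square
  have hsq : (0 : ℝ) ≤ (∑ i, (pdX i Φ₁ x₀ t₀ / Φ₁ x₀ t₀) ^ 2)
      + (∑ i, (pdX i Φ₂ x₀ t₀ / Φ₂ x₀ t₀) ^ 2)
      - 2 * (∑ i, (pdX i Φ₁ x₀ t₀ / Φ₁ x₀ t₀) * (pdX i Φ₂ x₀ t₀ / Φ₂ x₀ t₀))
      - 2 * (lam - gam) * (∑ i, k i * (pdX i Φ₁ x₀ t₀ / Φ₁ x₀ t₀))
      + 2 * (lam - gam) * (∑ i, k i * (pdX i Φ₂ x₀ t₀ / Φ₂ x₀ t₀))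
      + (lam - gam) ^ 2 := by
    have h := Finset.sum_nonneg (s := Finset.univ)
      (f := fun i => (pdX i Φ₁ x₀ t₀ / Φ₁ x₀ t₀ - pdX i Φ₂ x₀ t₀ / Φ₂ x₀ t₀
        - (lam - gam) * k i) ^ 2) fun i _ => sq_nonneg _
    have e : (∑ i, (pdX i Φ₁ x₀ t₀ / Φ₁ x₀ t₀ - pdX i Φ₂ x₀ t₀ / Φ₂ x₀ t₀
          - (lam - gam) * k i) ^ 2)
        = (∑ i, (pdX i Φ₁ x₀ t₀ / Φ₁ x₀ t₀) ^ 2)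
          + (∑ i, (pdX i Φ₂ x₀ t₀ / Φ₂ x₀ t₀) ^ 2)
          - 2 * (∑ i, (pdX i Φ₁ x₀ t₀ / Φ₁ x₀ t₀) * (pdX i Φ₂ x₀ t₀ / Φ₂ x₀ t₀))
          - 2 * (lam - gam) * (∑ i, k i * (pdX i Φ₁ x₀ t₀ / Φ₁ x₀ t₀))
          + 2 * (lam - gam) * (∑ i, k i * (pdX i Φ₂ x₀ t₀ / Φ₂ x₀ t₀))
          + (lam - gam) ^ 2 * (∑ i, k i ^ 2) := by
      rw [Finset.mul_sum, Finset.mul_sum, Finset.mul_sum, Finset.mul_sum]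
      rw [← Finset.sum_add_distrib, ← Finset.sum_sub_distrib, ← Finset.sum_sub_distrib,
        ← Finset.sum_add_distrib, ← Finset.sum_add_distrib]
      exact Finset.sum_congr rfl fun i _ => by ring
    rw [e, show (∑ i, k i ^ 2) = 1 from hk, mul_one] at h
    linarith [h]
  have hmu : μ₀ - (μ₁ + μ₂) / 2
      = (∑ i, pdX i (pdX i Φ₀) x₀ t₀ / Φ₀ x₀ t₀)
        - ((∑ i, pdX i (pdX i Φ₁) x₀ t₀ / Φ₁ x₀ t₀)
          + (∑ i, pdX i (pdX i Φ₂) x₀ t₀ / Φ₂ x₀ t₀)) / 2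
        + (lam - gam) / 2 * ((∑ i, k i * (pdX i Φ₁ x₀ t₀ / Φ₁ x₀ t₀))
          - (∑ i, k i * (pdX i Φ₂ x₀ t₀ / Φ₂ x₀ t₀)))
        - (lam - gam) ^ 2 / 4 := by
    linear_combination (-1 : ℝ) * E₀ + E₁ / 2 + E₂ / 2 + hR1 - (lam + gam) * hR2 - hM3
  linarith [hmu, hM2, hSQ, hsq]
end
end

section
/- Let μ : ℝ → ℝ be a convex continuous function with μ(0) > 0, and suppose there exists M ≥ 0 such that |μ(λ) − λ² − μ(0)| ≤ M|λ| for all λ ∈ ℝ. Then the function h(λ) := μ(λ)/λ attains a global minimum over (0, +∞) at some λ* ∈ (0, +∞); h is nonincreasing on (0, λ*] and nondecreasing on [λ*, +∞); and every local minimum of h on (0, +∞) is a global minimum. If in addition μ is strictly convex, then λ* is unique, h is strictly decreasing on (0, λ*] and strictly increasing on [λ*, +∞), and moreover for every c > h(λ*) there is a unique λ_c ∈ (0, λ*) with μ(λ_c) = c λ_c. -/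
open MeasureTheory Filter Set

noncomputable section

section StatementAux

variable {μ : ℝ → ℝ}

private lemma combo_aux {a b x : ℝ} (hax : a < x) (hxb : x < b) :
    ∃ t s : ℝ, 0 < t ∧ 0 < s ∧ t + s = 1 ∧ t * a + s * b = x := by
  have hab : (0:ℝ) < b - a := by linarith
  refine ⟨(b - x) / (b - a), (x - a) / (b - a),
    div_pos (by linarith) hab, div_pos (by linarith) hab, ?_, ?_⟩
  · rw [← add_div, div_eq_one_iff_eq hab.ne']; ring
  · field_simp; ring

private lemma quasi_le (hconv : ConvexOn ℝ (Set.univ : Set ℝ) μ) {a b x c : ℝ}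
    (hax : a ≤ x) (hxb : x ≤ b) (hA : μ a ≤ c * a) (hB : μ b ≤ c * b) :
    μ x ≤ c * x := by
  rcases hax.eq_or_lt with rfl | hax
  · exact hA
  rcases hxb.eq_or_lt with rfl | hxb
  · exact hB
  obtain ⟨t, s, ht, hs, hts, hx⟩ := combo_aux hax hxb
  have h2 := hconv.2 (Set.mem_univ a) (Set.mem_univ b) ht.le hs.le hts
  simp only [smul_eq_mul] at h2
  rw [hx] at h2
  have hcx : c * x = t * (c * a) + s * (c * b) := by rw [← hx]; ring
  nlinarith [mul_le_mul_of_nonneg_left hA ht.le, mul_le_mul_of_nonneg_left hB hs.le]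

private lemma quasi_lt_left (hconv : ConvexOn ℝ (Set.univ : Set ℝ) μ) {a b x c : ℝ}
    (hax : a < x) (hxb : x < b) (hA : μ a < c * a) (hB : μ b ≤ c * b) :
    μ x < c * x := by
  obtain ⟨t, s, ht, hs, hts, hx⟩ := combo_aux hax hxb
  have h2 := hconv.2 (Set.mem_univ a) (Set.mem_univ b) ht.le hs.le hts
  simp only [smul_eq_mul] at h2
  rw [hx] at h2
  have hcx : c * x = t * (c * a) + s * (c * b) := by rw [← hx]; ring
  nlinarith [mul_lt_mul_of_pos_left hA ht, mul_le_mul_of_nonneg_left hB hs.le]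

private lemma quasi_lt_right (hconv : ConvexOn ℝ (Set.univ : Set ℝ) μ) {a b x c : ℝ}
    (hax : a < x) (hxb : x < b) (hA : μ a ≤ c * a) (hB : μ b < c * b) :
    μ x < c * x := by
  obtain ⟨t, s, ht, hs, hts, hx⟩ := combo_aux hax hxb
  have h2 := hconv.2 (Set.mem_univ a) (Set.mem_univ b) ht.le hs.le hts
  simp only [smul_eq_mul] at h2
  rw [hx] at h2
  have hcx : c * x = t * (c * a) + s * (c * b) := by rw [← hx]; ring
  nlinarith [mul_le_mul_of_nonneg_left hA ht.le, mul_lt_mul_of_pos_left hB hs]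

private lemma quasi_strict (hconv : StrictConvexOn ℝ (Set.univ : Set ℝ) μ) {a b x c : ℝ}
    (hax : a < x) (hxb : x < b) (hA : μ a ≤ c * a) (hB : μ b ≤ c * b) :
    μ x < c * x := by
  obtain ⟨t, s, ht, hs, hts, hx⟩ := combo_aux hax hxb
  have h2 := hconv.2 (Set.mem_univ a) (Set.mem_univ b) (ne_of_lt (hax.trans hxb)) ht hs hts
  simp only [smul_eq_mul] at h2
  rw [hx] at h2
  have hcx : c * x = t * (c * a) + s * (c * b) := by rw [← hx]; ring
  nlinarith [mul_le_mul_of_nonneg_left hA ht.le, mul_le_mul_of_nonneg_left hB hs.le]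

end StatementAux

/-- properties of `h(λ) = μ(λ)/λ` for a convex continuous `μ` with
`μ(0) > 0` and quadratic growth `|μ(λ) - λ² - μ(0)| ≤ M|λ|`: existence of a global
minimizer `λ* > 0`, monotonicity on each side, local minima are global; under strict
convexity, uniqueness of `λ*`, strict monotonicity, and for `c > h(λ*)` a unique
`λ_c ∈ (0,λ*)` with `μ(λ_c) = c λ_c`. -/
theorem statement18 (μ : ℝ → ℝ)
    (hconv : ConvexOn ℝ univ μ) (hcont : Continuous μ)
    (h0 : 0 < μ 0)
    (M : ℝ) (hM : 0 ≤ M)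
    (hgrowth : ∀ lam : ℝ, |μ lam - lam ^ 2 - μ 0| ≤ M * |lam|) :
    ∃ lamstar : ℝ, 0 < lamstar ∧
      (∀ lam > (0 : ℝ), μ lamstar / lamstar ≤ μ lam / lam) ∧
      AntitoneOn (fun lam => μ lam / lam) (Ioc 0 lamstar) ∧
      MonotoneOn (fun lam => μ lam / lam) (Ici lamstar) ∧
      (∀ lam₀ > (0 : ℝ),
        (∃ δ > (0 : ℝ), ∀ lam ∈ Ioo (lam₀ - δ) (lam₀ + δ), 0 < lam →
          μ lam₀ / lam₀ ≤ μ lam / lam) →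
        ∀ lam > (0 : ℝ), μ lam₀ / lam₀ ≤ μ lam / lam) ∧
      (StrictConvexOn ℝ univ μ →
        (∀ lam' > (0 : ℝ), (∀ lam > (0 : ℝ), μ lam' / lam' ≤ μ lam / lam) →
          lam' = lamstar) ∧
        StrictAntiOn (fun lam => μ lam / lam) (Ioc 0 lamstar) ∧
        StrictMonoOn (fun lam => μ lam / lam) (Ici lamstar) ∧
        (∀ c : ℝ, μ lamstar / lamstar < c →
          ∃! lamc : ℝ, lamc ∈ Ioo 0 lamstar ∧ μ lamc = c * lamc)) := by
    -- abbreviation: h lam = μ lam / lam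
  have hmul : ∀ {x : ℝ}, 0 < x → μ x = (μ x / x) * x := by
    intro x hx; rw [div_mul_cancel₀ _ hx.ne']
  -- lower growth bound
  have hlow : ∀ lam : ℝ, 0 < lam → lam + μ 0 / lam - M ≤ μ lam / lam := by
    intro lam hlam
    have hg := (abs_le.1 (hgrowth lam)).1
    rw [abs_of_pos hlam] at hg
    rw [le_div_iff₀ hlam]
    have hx : (lam + μ 0 / lam - M) * lam = lam ^ 2 + μ 0 - M * lam := by
      field_simp
    rw [hx]; linarith
  have hg1 := (abs_le.1 (hgrowth 1)).1
  rw [abs_one, mul_one] at hg1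
  set B : ℝ := |μ 1| + M + 1 with hBdef
  have habs1 := abs_nonneg (μ 1)
  have hle1 := le_abs_self (μ 1)
  have hB1 : (1:ℝ) ≤ B := by rw [hBdef]; linarith
  have hBpos : (0:ℝ) < B := by linarith
  have hμ0B : μ 0 < B := by rw [hBdef]; nlinarith
  set a0 : ℝ := μ 0 / B with ha0def
  have ha0 : 0 < a0 := div_pos h0 hBpos
  have ha01 : a0 < 1 := (div_lt_one hBpos).2 hμ0B
  -- continuity of h on Ioi 0
  have hcontIoi : ContinuousOn (fun lam => μ lam / lam) (Ioi (0:ℝ)) :=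
    hcont.continuousOn.div continuousOn_id (fun x hx => ne_of_gt hx)
  have hsub : Icc a0 B ⊆ Ioi (0:ℝ) := fun x hx => lt_of_lt_of_le ha0 hx.1
  obtain ⟨lamstar, hmemK, hmin⟩ :=
    isCompact_Icc.exists_isMinOn (⟨1, ha01.le, hB1⟩ : (Icc a0 B).Nonempty)
      (hcontIoi.mono hsub)
  have hminK : ∀ x ∈ Icc a0 B, μ lamstar / lamstar ≤ μ x / x :=
    fun x hx => isMinOn_iff.mp hmin x hx
  have hstar_pos : 0 < lamstar := lt_of_lt_of_le ha0 hmemK.1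
  have h1val : μ lamstar / lamstar ≤ μ 1 := by
    have := hminK 1 ⟨ha01.le, hB1⟩; simpa using this
  -- global minimality
  have gmin : ∀ lam : ℝ, 0 < lam → μ lamstar / lamstar ≤ μ lam / lam := by
    intro lam hlam
    rcases le_or_gt a0 lam with h1 | h1
    · rcases le_or_gt lam B with h2 | h2
      · exact hminK lam ⟨h1, h2⟩
      · have hl := hlow lam hlam
        have hp : 0 < μ 0 / lam := div_pos h0 hlam
        linarith
    · have hl := hlow lam hlam
      have hchain : B < μ 0 / lam := by
        rw [lt_div_iff₀ hlam]
        have := (lt_div_iff₀ hBpos).1 h1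
        linarith
      linarith
  refine ⟨lamstar, hstar_pos, gmin, ?_, ?_, ?_, ?_⟩
  -- AntitoneOn
  · intro a ha b hb hab
    dsimp only
    rcases hab.eq_or_lt with rfl | hlt
    · exact le_refl _
    have hbpos : 0 < b := ha.1.trans hlt
    have hA : μ a ≤ (μ a / a) * a := (hmul ha.1).le
    have hB : μ lamstar ≤ (μ a / a) * lamstar := by
      have h1 := gmin a ha.1
      calc μ lamstar = (μ lamstar / lamstar) * lamstar := hmul hstar_pos
        _ ≤ (μ a / a) * lamstar := mul_le_mul_of_nonneg_right h1 hstar_pos.le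
    exact (div_le_iff₀ hbpos).2 (quasi_le hconv hlt.le hb.2 hA hB)
  -- MonotoneOn
  · intro a ha b hb hab
    dsimp only
    rcases hab.eq_or_lt with rfl | hlt
    · exact le_refl _
    have hbpos : 0 < b := hstar_pos.trans_le hb
    have hapos : 0 < a := hstar_pos.trans_le ha
    have hB : μ b ≤ (μ b / b) * b := (hmul hbpos).le
    have hA : μ lamstar ≤ (μ b / b) * lamstar := by
      have h1 := gmin b hbpos
      calc μ lamstar = (μ lamstar / lamstar) * lamstar := hmul hstar_pos
        _ ≤ (μ b / b) * lamstar := mul_le_mul_of_nonneg_right h1 hstar_pos.le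
    exact (div_le_iff₀ hapos).2 (quasi_le hconv ha hlt.le hA hB)
  -- local minima are global
  · rintro lam₀ hlam₀ ⟨δ, hδ, hball⟩ lam hlam
    by_contra hcon
    push_neg at hcon
    have hA0 : μ lam₀ = (μ lam₀ / lam₀) * lam₀ := hmul hlam₀
    have hAl : μ lam < (μ lam₀ / lam₀) * lam := (div_lt_iff₀ hlam).1 hcon
    have hne : lam ≠ lam₀ := by
      intro h; rw [h] at hcon; exact lt_irrefl _ hcon
    rcases hne.lt_or_gt with hll | hll
    · set x := max ((lam + lam₀) / 2) (lam₀ - δ / 2) with hxdef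
      have hx1 : lam < x := lt_of_lt_of_le (by linarith) (le_max_left _ _)
      have hx2 : x < lam₀ := max_lt (by linarith) (by linarith)
      have hx3 : lam₀ - δ < x := lt_of_lt_of_le (by linarith) (le_max_right _ _)
      have hx4 : x < lam₀ + δ := by linarith
      have hxpos : 0 < x := hlam.trans hx1
      have hmx := quasi_lt_left hconv hx1 hx2 hAl hA0.le
      have hxlt : μ x / x < μ lam₀ / lam₀ := (div_lt_iff₀ hxpos).2 hmx
      exact absurd (hball x ⟨hx3, hx4⟩ hxpos) (not_le.2 hxlt)
    · set x := min ((lam₀ + lam) / 2) (lam₀ + δ / 2) with hxdef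
      have hx1 : lam₀ < x := lt_min (by linarith) (by linarith)
      have hx2 : x < lam := lt_of_le_of_lt (min_le_left _ _) (by linarith)
      have hx3 : x < lam₀ + δ := lt_of_le_of_lt (min_le_right _ _) (by linarith)
      have hx4 : lam₀ - δ < x := by linarith
      have hxpos : 0 < x := hlam₀.trans hx1
      have hmx := quasi_lt_right hconv hx1 hx2 hA0.le hAl
      have hxlt : μ x / x < μ lam₀ / lam₀ := (div_lt_iff₀ hxpos).2 hmx
      exact absurd (hball x ⟨hx4, hx3⟩ hxpos) (not_le.2 hxlt)
  -- strict convexity part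
  · intro hsconv
    have huniq : ∀ lam' > (0:ℝ),
        (∀ lam > (0:ℝ), μ lam' / lam' ≤ μ lam / lam) → lam' = lamstar := by
      intro l hl hminl
      by_contra hne
      have heq : μ l / l = μ lamstar / lamstar :=
        le_antisymm (hminl lamstar hstar_pos) (gmin l hl)
      have hBs : μ lamstar ≤ (μ l / l) * lamstar := by
        rw [heq]; exact (hmul hstar_pos).le
      have hAl : μ l ≤ (μ l / l) * l := (hmul hl).le
      rcases Ne.lt_or_gt hne with hll | hll
      · have hx1 : l < (l + lamstar) / 2 := by linarith
        have hx2 : (l + lamstar) / 2 < lamstar := by linarith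
        have hxpos : 0 < (l + lamstar) / 2 := by linarith
        have hmx := quasi_strict hsconv hx1 hx2 hAl hBs
        have := (div_lt_iff₀ hxpos).2 hmx
        exact absurd (hminl _ hxpos) (not_le.2 this)
      · have hx1 : lamstar < (lamstar + l) / 2 := by linarith
        have hx2 : (lamstar + l) / 2 < l := by linarith
        have hxpos : 0 < (lamstar + l) / 2 := by linarith
        have hmx := quasi_strict hsconv hx1 hx2 hBs hAl
        have := (div_lt_iff₀ hxpos).2 hmx
        exact absurd (hminl _ hxpos) (not_le.2 this)
    have hsanti : StrictAntiOn (fun lam => μ lam / lam) (Ioc 0 lamstar) := by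
      intro a ha b hb hab
      dsimp only
      rcases hb.2.eq_or_lt with heq | hblt
      · subst heq
        rcases (gmin a ha.1).lt_or_eq with h | h
        · exact h
        · exfalso
          have hamin : ∀ lam > (0:ℝ), μ a / a ≤ μ lam / lam := by
            intro lam hl; rw [← h]; exact gmin lam hl
          have := huniq a ha.1 hamin
          rw [this] at hab; exact lt_irrefl _ hab
      · have hA : μ a ≤ (μ a / a) * a := (hmul ha.1).le
        have hB : μ lamstar ≤ (μ a / a) * lamstar := by
          calc μ lamstar = (μ lamstar / lamstar) * lamstar := hmul hstar_pos
            _ ≤ (μ a / a) * lamstar :=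
              mul_le_mul_of_nonneg_right (gmin a ha.1) hstar_pos.le
        have hbpos : 0 < b := ha.1.trans hab
        exact (div_lt_iff₀ hbpos).2 (quasi_strict hsconv hab hblt hA hB)
    have hsmono : StrictMonoOn (fun lam => μ lam / lam) (Ici lamstar) := by
      intro a ha b hb hab
      dsimp only
      have hbpos : 0 < b := hstar_pos.trans_le (le_trans ha hab.le)
      rcases (show lamstar ≤ a from ha).eq_or_lt with heq | halt
      · rcases (gmin b hbpos).lt_or_eq with h | h
        · rw [← heq]; exact h
        · exfalso
          have hbmin : ∀ lam > (0:ℝ), μ b / b ≤ μ lam / lam := by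
            intro lam hl; rw [← h]; exact gmin lam hl
          have := huniq b hbpos hbmin
          rw [this, ← heq] at hab; exact lt_irrefl _ hab
      · have hapos : 0 < a := hstar_pos.trans halt
        have hB : μ b ≤ (μ b / b) * b := (hmul hbpos).le
        have hA : μ lamstar ≤ (μ b / b) * lamstar := by
          calc μ lamstar = (μ lamstar / lamstar) * lamstar := hmul hstar_pos
            _ ≤ (μ b / b) * lamstar :=
              mul_le_mul_of_nonneg_right (gmin b hbpos) hstar_pos.le
        exact (div_lt_iff₀ hapos).2 (quasi_strict hsconv halt hab hA hB)
    refine ⟨huniq, hsanti, hsmono, ?_⟩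
    intro c hc
    have hgc : Continuous (fun l : ℝ => μ l - c * l) :=
      hcont.sub (continuous_const.mul continuous_id)
    have hv0 : (0:ℝ) < μ 0 - c * 0 := by simpa using h0
    have hvs : μ lamstar - c * lamstar < 0 := by
      have h1 : μ lamstar = (μ lamstar / lamstar) * lamstar := hmul hstar_pos
      nlinarith [hc, hstar_pos]
    have hiv := intermediate_value_Ioo' hstar_pos.le
      (hgc.continuousOn (s := Icc 0 lamstar))
    obtain ⟨lamc, hlamc, heqc⟩ := hiv (⟨hvs, hv0⟩ :
      (0:ℝ) ∈ Ioo (μ lamstar - c * lamstar) (μ 0 - c * 0))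
    simp only at heqc
    have hceq : μ lamc = c * lamc := by linarith
    refine ⟨lamc, ⟨hlamc, hceq⟩, ?_⟩
    rintro y ⟨hy, hyeq⟩
    have hy' : μ y / y = c := by
      rw [hyeq, mul_div_assoc, div_self hy.1.ne', mul_one]
    have hc' : μ lamc / lamc = c := by
      rw [hceq, mul_div_assoc, div_self hlamc.1.ne', mul_one]
    exact hsanti.injOn ⟨hy.1, hy.2.le⟩ ⟨hlamc.1, hlamc.2.le⟩ (by rw [hy', hc'])
end
end

section
/- Let b be a smooth vector field, 1-periodic in each component of x and in t and spatially divergence-free, k ∈ ℝ^N a unit vector, c₀ ∈ ℝ, λ ∈ ℝ, and suppose φ(x,t) > 0 is smooth, 1-periodic in each component of x and in t, and satisfies Δ_x φ + (b − 2λk)·∇_x φ + (λ² − λ(b·k) + c₀)φ − φ_t = μφ pointwise for some μ ∈ ℝ. Then |μ − λ² − c₀| ≤ |λ| · sup_{(x,t)} |b(x,t)·k| ≤ |λ| ‖b‖_∞; in particular μ(λ)/λ → +∞ as λ → +∞, and for λ = 0 one has μ = c₀. -/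
open MeasureTheory Filter Set
open scoped ContDiff

noncomputable section

namespace Statement19Aux

variable {N : ℕ}

lemma update_add_single (x : Fin N → ℝ) (i : Fin N) (z : ℝ) :
    Function.update x i (z + 1) = Function.update x i z + Pi.single i 1 := by
  funext j
  rcases eq_or_ne j i with h | h
  · subst h; simp
  · simp [Function.update_apply, h, Pi.single_apply]

lemma periodic_reduce (g : (Fin N → ℝ) → ℝ → ℝ)
    (hx : ∀ x t i, g (x + Pi.single i 1) t = g x t)
    (ht : ∀ x t, g x (t + 1) = g x t) (x : Fin N → ℝ) (t : ℝ) :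
    ∃ q : (Fin N → ℝ) × ℝ,
      q ∈ (Icc (0 : Fin N → ℝ) 1) ×ˢ (Icc (0 : ℝ) 1) ∧ g q.1 q.2 = g x t := by
  have ht' : ∀ x, g x (Int.fract t) = g x t := by
    intro x
    have hpt : Function.Periodic (fun τ => g x τ) 1 := fun τ => ht x τ
    have h := hpt.sub_int_mul_eq (x := t) (n := ⌊t⌋)
    rw [mul_one, Int.self_sub_floor] at h
    exact h
  have hred : ∀ s : Finset (Fin N),
      g (fun i => if i ∈ s then Int.fract (x i) else x i) (Int.fract t)
        = g x (Int.fract t) := by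
    intro s
    induction s using Finset.induction_on with
    | empty => simp
    | @insert j s hj ih =>
      set y : Fin N → ℝ := fun i => if i ∈ s then Int.fract (x i) else x i with hy
      have hupdate : (fun i => if i ∈ insert j s then Int.fract (x i) else x i)
          = Function.update y j (Int.fract (x j)) := by
        funext i
        rcases eq_or_ne i j with h | h
        · subst h; simp [Function.update_self, hy]
        · simp [Function.update_apply, h, Finset.mem_insert, hy]
      have hslice : Function.Periodic (fun z => g (Function.update y j z) (Int.fract t)) 1 := by
        intro z
        simp only [update_add_single]
        exact hx _ _ j
      have h2 : g (Function.update y j (Int.fract (x j))) (Int.fract t)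
          = g (Function.update y j (x j)) (Int.fract t) := by
        have h := hslice.sub_int_mul_eq (x := x j) (n := ⌊x j⌋)
        rw [mul_one, Int.self_sub_floor] at h
        exact h
      have hyj : y j = x j := by simp [hy, hj]
      rw [hupdate, h2, ← hyj, Function.update_eq_self, ih]
  have hfin := hred Finset.univ
  refine ⟨(fun i => Int.fract (x i), Int.fract t), ?_, ?_⟩
  · refine Set.mem_prod.mpr ⟨⟨?_, ?_⟩, ⟨Int.fract_nonneg t, (Int.fract_lt_one t).le⟩⟩
    · intro i; exact Int.fract_nonneg (x i)
    · intro i; exact (Int.fract_lt_one (x i)).le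
  · have : (fun i => if i ∈ (Finset.univ : Finset (Fin N)) then Int.fract (x i) else x i)
        = fun i => Int.fract (x i) := by
      funext i; simp
    rw [this] at hfin
    exact hfin.trans (ht' x)

lemma exists_max (g : (Fin N → ℝ) → ℝ → ℝ)
    (hx : ∀ x t i, g (x + Pi.single i 1) t = g x t)
    (ht : ∀ x t, g x (t + 1) = g x t)
    (hc : Continuous fun p : (Fin N → ℝ) × ℝ => g p.1 p.2) :
    ∃ p : (Fin N → ℝ) × ℝ, ∀ q : (Fin N → ℝ) × ℝ, g q.1 q.2 ≤ g p.1 p.2 := by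
  have hK : IsCompact ((Icc (0 : Fin N → ℝ) 1) ×ˢ (Icc (0 : ℝ) 1)) :=
    isCompact_Icc.prod isCompact_Icc
  have hne : ((Icc (0 : Fin N → ℝ) 1) ×ˢ (Icc (0 : ℝ) 1)).Nonempty :=
    ⟨(0, 0), Set.mem_prod.mpr ⟨Set.left_mem_Icc.mpr zero_le_one, Set.left_mem_Icc.mpr zero_le_one⟩⟩
  obtain ⟨p, _, hp⟩ := hK.exists_isMaxOn hne hc.continuousOn
  refine ⟨p, fun q => ?_⟩
  obtain ⟨q', hq', he⟩ := periodic_reduce g hx ht q.1 q.2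
  calc g q.1 q.2 = g q'.1 q'.2 := he.symm
    _ ≤ g p.1 p.2 := hp hq'

lemma secondDeriv_nonpos {g : ℝ → ℝ} (hg : ContDiff ℝ ∞ g) {x₀ : ℝ}
    (hmax : ∀ z, g z ≤ g x₀) : deriv (deriv g) x₀ ≤ 0 := by
  by_contra hcon
  push_neg at hcon
  have hone : (1 : WithTop ℕ∞) ≤ ∞ := by exact_mod_cast le_top
  have hg' : Differentiable ℝ g := hg.differentiable (by simp)
  have hh : ContDiff ℝ ∞ (deriv g) := (contDiff_infty_iff_deriv.mp hg).2
  have hd : HasDerivAt (deriv g) (deriv (deriv g) x₀) x₀ :=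
    ((hh.differentiable (by simp)) x₀).hasDerivAt
  have h0 : deriv g x₀ = 0 :=
    IsLocalMax.deriv_eq_zero (Filter.Eventually.of_forall hmax)
  have hslope := hasDerivAt_iff_tendsto_slope.mp hd
  have hev : ∀ᶠ z in nhdsWithin x₀ (Ioi x₀), 0 < slope (deriv g) x₀ z := by
    have h1 : ∀ᶠ z in nhdsWithin x₀ {x₀}ᶜ, 0 < slope (deriv g) x₀ z :=
      hslope.eventually (eventually_gt_nhds hcon)
    exact h1.filter_mono (nhdsWithin_mono _ fun z hz => ne_of_gt hz)
  obtain ⟨u, hu, hIoo⟩ := mem_nhdsGT_iff_exists_Ioo_subset.mp hev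
  have hxu : x₀ < u := hu
  have hpos : ∀ z ∈ Ioo x₀ u, 0 < deriv g z := by
    intro z hz
    have h1 := hIoo hz
    have h2 : 0 < z - x₀ := sub_pos.2 hz.1
    rw [Set.mem_setOf_eq, slope_def_field, h0, sub_zero] at h1
    rcases div_pos_iff.mp h1 with ⟨h, _⟩ | ⟨_, h⟩
    · exact h
    · linarith
  have hsm : StrictMonoOn g (Icc x₀ u) := by
    apply strictMonoOn_of_deriv_pos (convex_Icc _ _) hg'.continuous.continuousOn
    intro z hz
    rw [interior_Icc] at hz
    exact hpos z hz
  have hm : x₀ < (x₀ + u) / 2 := by linarith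
  have hmem1 : x₀ ∈ Icc x₀ u := Set.left_mem_Icc.mpr hxu.le
  have hmem2 : (x₀ + u) / 2 ∈ Icc x₀ u := ⟨by linarith, by linarith⟩
  exact absurd (hmax ((x₀ + u) / 2)) (not_le.mpr (hsm hmem1 hmem2 hm))

lemma secondDeriv_nonneg {g : ℝ → ℝ} (hg : ContDiff ℝ ∞ g) {x₀ : ℝ}
    (hmin : ∀ z, g x₀ ≤ g z) : 0 ≤ deriv (deriv g) x₀ := by
  have h := secondDeriv_nonpos (g := fun z => -g z) hg.neg
    (fun z => neg_le_neg (hmin z))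
  rw [deriv.fun_neg'] at h
  have e2 : deriv (fun z => -deriv g z) x₀ = -deriv (deriv g) x₀ := deriv.fun_neg
  rw [e2] at h
  linarith

lemma update_contDiff (x : Fin N → ℝ) (i : Fin N) :
    ContDiff ℝ ∞ (fun z : ℝ => Function.update x i z) := by
  apply contDiff_pi.mpr
  intro j
  rcases eq_or_ne j i with h | h
  · subst h
    simp only [Function.update_self]
    exact contDiff_id
  · simp only [Function.update_apply, if_neg h]
    exact contDiff_const

lemma sliceX_contDiff {Φ : (Fin N → ℝ) → ℝ → ℝ}
    (hΦ : ContDiff ℝ ∞ fun p : (Fin N → ℝ) × ℝ => Φ p.1 p.2)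
    (x : Fin N → ℝ) (i : Fin N) (t : ℝ) :
    ContDiff ℝ ∞ fun z => Φ (Function.update x i z) t :=
  hΦ.comp ((update_contDiff x i).prodMk contDiff_const)

end Statement19Aux

open Statement19Aux in
/-- integrating the eigenvalue equation over the period cell gives
`|μ(λ) - λ² - c₀| ≤ |λ| sup|b·k| ≤ |λ| ‖b‖_∞`; in particular `μ(λ)/λ → +∞` as
`λ → +∞` and `μ(0) = c₀`. -/
theorem statement19 {N : ℕ} (hN : 1 ≤ N) (k : Fin N → ℝ) (hk : IsUnitVector k)
    (b : (Fin N → ℝ) → ℝ → (Fin N → ℝ)) (hb : IsAdmissibleField b)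
    (c₀ : ℝ) (μ : ℝ → ℝ) (Φ : ℝ → (Fin N → ℝ) → ℝ → ℝ)
    (hμ : ∀ lam : ℝ, IsEigenpair b k c₀ lam (μ lam) (Φ lam)) :
    (∀ lam : ℝ,
      |μ lam - lam ^ 2 - c₀| ≤
        |lam| * (⨆ p : (Fin N → ℝ) × ℝ, |∑ i, b p.1 p.2 i * k i|) ∧
      |lam| * (⨆ p : (Fin N → ℝ) × ℝ, |∑ i, b p.1 p.2 i * k i|) ≤
        |lam| * (⨆ p : (Fin N → ℝ) × ℝ, Real.sqrt (∑ i, (b p.1 p.2 i) ^ 2))) ∧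
    Tendsto (fun lam => μ lam / lam) atTop atTop ∧
    μ 0 = c₀ := by
  classical
  set S : ℝ := ⨆ p : (Fin N → ℝ) × ℝ, |∑ i, b p.1 p.2 i * k i| with hSdef
  have hbc : Continuous fun p : (Fin N → ℝ) × ℝ => b p.1 p.2 := hb.1.continuous
  have hBcont : Continuous fun p : (Fin N → ℝ) × ℝ => ∑ i, b p.1 p.2 i * k i :=
    continuous_finset_sum _ fun i _ => ((continuous_apply i).comp hbc).mul continuous_const
  obtain ⟨pB, hpB⟩ := exists_max (fun x t => |∑ j, b x t j * k j|)
    (by intro x t i; simp only [hb.2.1]) (by intro x t; simp only [hb.2.2.1]) hBcont.abs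
  have hSbdd : BddAbove (Set.range fun p : (Fin N → ℝ) × ℝ => |∑ i, b p.1 p.2 i * k i|) :=
    ⟨|∑ j, b pB.1 pB.2 j * k j|, by rintro v ⟨q, rfl⟩; exact hpB q⟩
  have hle_S : ∀ q : (Fin N → ℝ) × ℝ, |∑ i, b q.1 q.2 i * k i| ≤ S :=
    fun q => le_ciSup hSbdd q
  have hWcont : Continuous fun p : (Fin N → ℝ) × ℝ => Real.sqrt (∑ i, (b p.1 p.2 i) ^ 2) :=
    Real.continuous_sqrt.comp
      (continuous_finset_sum _ fun i _ => ((continuous_apply i).comp hbc).pow 2)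
  obtain ⟨pW, hpW⟩ := exists_max (fun x t => Real.sqrt (∑ i, (b x t i) ^ 2))
    (by intro x t i; simp only [hb.2.1]) (by intro x t; simp only [hb.2.2.1]) hWcont
  have hWbdd : BddAbove (Set.range fun p : (Fin N → ℝ) × ℝ =>
      Real.sqrt (∑ i, (b p.1 p.2 i) ^ 2)) :=
    ⟨Real.sqrt (∑ i, (b pW.1 pW.2 i) ^ 2), by rintro v ⟨q, rfl⟩; exact hpW q⟩
  have hcs : ∀ p : (Fin N → ℝ) × ℝ,
      |∑ i, b p.1 p.2 i * k i| ≤ Real.sqrt (∑ i, (b p.1 p.2 i) ^ 2) := by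
    intro p
    have h1 : (∑ i, b p.1 p.2 i * k i) ^ 2
        ≤ (∑ i, (b p.1 p.2 i) ^ 2) * (∑ i, (k i) ^ 2) :=
      Finset.sum_mul_sq_le_sq_mul_sq _ _ _
    rw [hk, mul_one] at h1
    calc |∑ i, b p.1 p.2 i * k i| = Real.sqrt ((∑ i, b p.1 p.2 i * k i) ^ 2) :=
          (Real.sqrt_sq_eq_abs _).symm
      _ ≤ Real.sqrt (∑ i, (b p.1 p.2 i) ^ 2) := Real.sqrt_le_sqrt h1
  -- the key bound, for every lam
  have key : ∀ lam : ℝ, |μ lam - lam ^ 2 - c₀| ≤ |lam| * S := by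
    intro lam
    obtain ⟨hF, hpos, hperx, hpert, heq⟩ := hμ lam
    have hFinf : ContDiff ℝ ∞ (fun p : (Fin N → ℝ) × ℝ => Φ lam p.1 p.2) := hF.of_le (by simp)
    obtain ⟨pM, hpM⟩ := exists_max (Φ lam) hperx hpert hF.continuous
    obtain ⟨pm, hpm'⟩ := exists_max (fun x t => -(Φ lam x t))
      (by intro x t i; simp only [hperx]) (by intro x t; simp only [hpert]) hF.continuous.neg
    have hpm : ∀ q : (Fin N → ℝ) × ℝ, Φ lam pm.1 pm.2 ≤ Φ lam q.1 q.2 := by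
      intro q; have h := hpm' q; linarith
    obtain ⟨xM, tM⟩ := pM
    obtain ⟨xm, tm⟩ := pm
    -- facts at the maximum point
    have hT0 : pdT (Φ lam) xM tM = 0 := by
      have hmax : IsLocalMax (fun z => Φ lam xM z) tM :=
        Filter.Eventually.of_forall fun z => hpM (xM, z)
      simpa [pdT] using hmax.deriv_eq_zero
    have hX0 : ∀ i, pdX i (Φ lam) xM tM = 0 := by
      intro i
      have hmax : IsLocalMax (fun z => Φ lam (Function.update xM i z) tM) (xM i) := by
        apply Filter.Eventually.of_forall
        intro z
        simpa [Function.update_eq_self] using hpM (Function.update xM i z, tM)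
      simpa [pdX] using hmax.deriv_eq_zero
    have hXX : ∀ i, pdX i (pdX i (Φ lam)) xM tM ≤ 0 := by
      intro i
      have heq2 : pdX i (pdX i (Φ lam)) xM tM
          = deriv (deriv (fun z => Φ lam (Function.update xM i z) tM)) (xM i) := by
        simp only [pdX, Function.update_idem, Function.update_self]
      rw [heq2]
      exact secondDeriv_nonpos (sliceX_contDiff hFinf xM i tM)
        (fun z => by simpa [Function.update_eq_self] using hpM (Function.update xM i z, tM))
    have heqM := heq xM tM
    have hz1 : (∑ i, (b xM tM i - 2 * lam * k i) * pdX i (Φ lam) xM tM) = 0 :=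
      Finset.sum_eq_zero fun i _ => by rw [hX0 i, mul_zero]
    have hz2 : (∑ i, pdX i (pdX i (Φ lam)) xM tM) ≤ 0 :=
      Finset.sum_nonpos fun i _ => hXX i
    have hΦM := hpos xM tM
    rw [hz1, hT0] at heqM
    have hup : μ lam ≤ lam ^ 2 - lam * (∑ i, b xM tM i * k i) + c₀ := by
      nlinarith [heqM, hz2, hΦM]
    -- facts at the minimum point
    have hT0' : pdT (Φ lam) xm tm = 0 := by
      have hmin : IsLocalMin (fun z => Φ lam xm z) tm :=
        Filter.Eventually.of_forall fun z => hpm (xm, z)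
      simpa [pdT] using hmin.deriv_eq_zero
    have hX0' : ∀ i, pdX i (Φ lam) xm tm = 0 := by
      intro i
      have hmin : IsLocalMin (fun z => Φ lam (Function.update xm i z) tm) (xm i) := by
        apply Filter.Eventually.of_forall
        intro z
        simpa [Function.update_eq_self] using hpm (Function.update xm i z, tm)
      simpa [pdX] using hmin.deriv_eq_zero
    have hXX' : ∀ i, 0 ≤ pdX i (pdX i (Φ lam)) xm tm := by
      intro i
      have heq2 : pdX i (pdX i (Φ lam)) xm tm
          = deriv (deriv (fun z => Φ lam (Function.update xm i z) tm)) (xm i) := by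
        simp only [pdX, Function.update_idem, Function.update_self]
      rw [heq2]
      exact secondDeriv_nonneg (sliceX_contDiff hFinf xm i tm)
        (fun z => by simpa [Function.update_eq_self] using hpm (Function.update xm i z, tm))
    have heqm := heq xm tm
    have hz1' : (∑ i, (b xm tm i - 2 * lam * k i) * pdX i (Φ lam) xm tm) = 0 :=
      Finset.sum_eq_zero fun i _ => by rw [hX0' i, mul_zero]
    have hz2' : 0 ≤ (∑ i, pdX i (pdX i (Φ lam)) xm tm) :=
      Finset.sum_nonneg fun i _ => hXX' i
    have hΦm := hpos xm tm
    rw [hz1', hT0'] at heqm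
    have hlo : lam ^ 2 - lam * (∑ i, b xm tm i * k i) + c₀ ≤ μ lam := by
      nlinarith [heqm, hz2', hΦm]
    -- combine
    refine abs_le.mpr ⟨?_, ?_⟩
    · have h2 := hle_S (xm, tm)
      have h3 : lam * (∑ i, b xm tm i * k i) ≤ |lam| * S := by
        calc lam * (∑ i, b xm tm i * k i) ≤ |lam * (∑ i, b xm tm i * k i)| := le_abs_self _
          _ = |lam| * |∑ i, b xm tm i * k i| := abs_mul _ _
          _ ≤ |lam| * S := mul_le_mul_of_nonneg_left h2 (abs_nonneg _)
      linarith
    · have h2 := hle_S (xM, tM)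
      have h3 : -(lam * (∑ i, b xM tM i * k i)) ≤ |lam| * S := by
        calc -(lam * (∑ i, b xM tM i * k i)) ≤ |lam * (∑ i, b xM tM i * k i)| := neg_le_abs _
          _ = |lam| * |∑ i, b xM tM i * k i| := abs_mul _ _
          _ ≤ |lam| * S := mul_le_mul_of_nonneg_left h2 (abs_nonneg _)
      linarith
  have hS0 : 0 ≤ S := le_trans (abs_nonneg _) (hle_S (0, 0))
  refine ⟨fun lam => ⟨key lam, ?_⟩, ?_, ?_⟩
  · exact mul_le_mul_of_nonneg_left (ciSup_mono hWbdd hcs) (abs_nonneg lam)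
  · -- μ(λ)/λ → ∞
    have hf : Tendsto (fun lam : ℝ => lam - (|c₀| + S)) atTop atTop :=
      tendsto_atTop_add_const_right atTop _ tendsto_id
    refine tendsto_atTop_mono' atTop ?_ hf
    filter_upwards [eventually_ge_atTop (1 : ℝ)] with lam hlam
    have hlam0 : (0 : ℝ) < lam := by linarith
    have habs := (abs_le.mp (key lam)).1
    rw [abs_of_pos hlam0] at habs
    have h2 : -|c₀| ≤ c₀ / lam := by
      rw [le_div_iff₀ hlam0]
      nlinarith [neg_abs_le c₀, abs_nonneg c₀]
    have h3 : (lam ^ 2 + c₀ - lam * S) / lam = lam + c₀ / lam - S := by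
      field_simp
    have h4 : (lam ^ 2 + c₀ - lam * S) / lam ≤ μ lam / lam := by
      gcongr
      linarith
    calc lam - (|c₀| + S) ≤ lam + c₀ / lam - S := by linarith
      _ = (lam ^ 2 + c₀ - lam * S) / lam := h3.symm
      _ ≤ μ lam / lam := h4
  · -- μ(0) = c₀
    have h := key 0
    rw [abs_zero, zero_mul] at h
    have h2 : μ 0 - 0 ^ 2 - c₀ = 0 := abs_nonpos_iff.mp h
    norm_num at h2
    linarith
end
end
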